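/- arXiv:2506.00429 — 9 statements merged into one kernel-verified Lean document; each statement's English description precedes it below -/
import Mathlib

section
/- Let p be an odd prime and G ≅ Z_{p^{t_1}} ⊕ ⋯ ⊕ Z_{p^{t_m}} a finite abelian p-group of order n with 1 ≤ t_1 ≤ ⋯ ≤ t_m. If (G, B_k^x) is a 1-design for some 2 ≤ k ≤ n and x ∈ G, then p divides k. -/
open Finset

/-- The family of `k`-element subsets of `G` whose elements sum to `x`. -/
def sumBlocks (G : Type) [AddCommGroup G] [Fintype G] [DecidableEq G]
    (k : ℕ) (x : G) : Finset (Finset G) :=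
  Finset.univ.filter (fun T => T.card = k ∧ T.sum id = x)

/-- The family of `k`-element subsets of `G \ {0}` whose elements sum to `x`. -/
def sumBlocksStar (G : Type) [AddCommGroup G] [Fintype G] [DecidableEq G]
    (k : ℕ) (x : G) : Finset (Finset G) :=
  Finset.univ.filter (fun T => T.card = k ∧ T.sum id = x ∧ (0 : G) ∉ T)

/-- `(G, B_k^x)` is a 1-design: the block family is nonempty and every
point of `G` lies in the same number of blocks. -/
def isOneDesign (G : Type) [AddCommGroup G] [Fintype G] [DecidableEq G]
    (k : ℕ) (x : G) : Prop :=
  sumBlocks G k x ≠ ∅ ∧ ∃ r : ℕ, ∀ y : G,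
    ((sumBlocks G k x).filter (fun B => y ∈ B)).card = r

/-- `e(x) = max {d : d ∣ exp(G), x ∈ dG}`. -/
noncomputable def eMax (G : Type) [AddCommGroup G] [Fintype G] [DecidableEq G] (x : G) : ℕ :=
  Nat.findGreatest (fun d => d ∣ AddMonoid.exponent G ∧ ∃ y : G, d • y = x)
    (AddMonoid.exponent G)

/-!
If `p ∤ k`, multiplication by `k` is a bijection of the `p`-group `G`, so translating a block by
`g` moves its sum by `k • g` and all `n = p ^ m` families `B_k^y` have the same size `b`; counting
`k`-subsets by their sums gives `n * b = C(n, k)`. Counting incidences in the design gives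
`n ∣ b * k`, hence `p ^ m ∣ b` and `p ^ (2 m) ∣ C(p ^ m, k)`. Kummer's theorem says that
`C(p ^ m, k)` has `p`-adic valuation exactly `m` when `p ∤ k`, so `m = 0`, contradicting `2 ≤ k ≤ n`.
-/

theorem Nat.Prime.pow_dvd_choose_prime_pow_iff {p m k j : ℕ} (hp : p.Prime) (hpk : ¬p ∣ k)
    (hk0 : k ≠ 0) (hkm : k ≤ p ^ m) : p ^ j ∣ (p ^ m).choose k ↔ j ≤ m := by
  rw [pow_dvd_iff_le_emultiplicity, hp.emultiplicity_choose_prime_pow hkm hk0,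
    multiplicity_eq_zero.mpr hpk, Nat.sub_zero, Nat.cast_le]

theorem exists_card_eq_prime_pow_of_forall_nsmul_eq_zero {p : ℕ} (hp : p.Prime)
    {G : Type} [AddCommGroup G] [Fintype G] (hpg : ∀ g : G, ∃ i : ℕ, p ^ i • g = 0) :
    ∃ m : ℕ, Fintype.card G = p ^ m := by
  have : Fact p.Prime := ⟨hp⟩
  have hPG : IsPGroup p (Multiplicative G) := fun g ↦ by
    obtain ⟨i, hi⟩ := hpg g.toAdd
    exact ⟨i, congrArg Multiplicative.ofAdd hi⟩
  obtain ⟨m, hm⟩ := IsPGroup.iff_card.mp hPG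
  exact ⟨m, by rwa [Nat.card_eq_fintype_card, Fintype.card_multiplicative] at hm⟩

section SumBlocks

variable {G : Type} [AddCommGroup G] [Fintype G] [DecidableEq G]

@[simp]
theorem mem_sumBlocks {k : ℕ} {x : G} {T : Finset G} :
    T ∈ sumBlocks G k x ↔ #T = k ∧ T.sum id = x := by
  simp [sumBlocks]

theorem card_sumBlocks_add_nsmul (k : ℕ) (x g : G) :
    #(sumBlocks G k (x + k • g)) = #(sumBlocks G k x) := by
  refine card_equiv (Equiv.addRight (-g)).finsetCongr fun T ↦ ?_
  simp only [mem_sumBlocks, Equiv.finsetCongr_apply, card_map, sum_map]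
  refine and_congr_right fun hT ↦ ?_
  simp only [id, Equiv.coe_toEmbedding, Equiv.coe_addRight]
  rw [sum_add_distrib, sum_const, hT, smul_neg, ← sub_eq_add_neg, sub_eq_iff_eq_add]

theorem card_sumBlocks_eq_of_surjective {k : ℕ} (hk : Function.Surjective (k • · : G → G))
    (x y : G) : #(sumBlocks G k y) = #(sumBlocks G k x) := by
  obtain ⟨g, hg⟩ := hk (y - x)
  rw [← card_sumBlocks_add_nsmul k x g, show k • g = y - x from hg, add_sub_cancel]

theorem sum_card_sumBlocks (k : ℕ) :
    ∑ x : G, #(sumBlocks G k x) = (Fintype.card G).choose k := by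
  rw [← card_univ, ← card_powersetCard, card_eq_sum_card_fiberwise (f := fun T ↦ T.sum id)
    fun _ _ ↦ mem_univ _]
  refine sum_congr rfl fun x _ ↦ congrArg card ?_
  ext T
  simp

theorem card_mul_card_sumBlocks_of_surjective {k : ℕ}
    (hk : Function.Surjective (k • · : G → G)) (x : G) :
    Fintype.card G * #(sumBlocks G k x) = (Fintype.card G).choose k := by
  rw [← sum_card_sumBlocks, sum_congr rfl fun y _ ↦ card_sumBlocks_eq_of_surjective hk x y,
    sum_const, card_univ, smul_eq_mul]

theorem sum_card_filter_mem_sumBlocks (k : ℕ) (x : G) :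
    ∑ y : G, #{B ∈ sumBlocks G k x | y ∈ B} = #(sumBlocks G k x) * k := by
  calc ∑ y : G, #{B ∈ sumBlocks G k x | y ∈ B}
      = ∑ B ∈ sumBlocks G k x, #B := by
        simp_rw [card_filter]
        rw [sum_comm]
        simp
    _ = #(sumBlocks G k x) * k := by
        rw [sum_congr rfl fun B hB ↦ (mem_sumBlocks.mp hB).1, sum_const, smul_eq_mul]

theorem isOneDesign.card_dvd_mul {k : ℕ} {x : G} (h : isOneDesign G k x) :
    Fintype.card G ∣ #(sumBlocks G k x) * k := by
  obtain ⟨-, r, hr⟩ := h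
  refine ⟨r, ?_⟩
  rw [← sum_card_filter_mem_sumBlocks, sum_congr rfl fun y _ ↦ hr y, sum_const, card_univ,
    smul_eq_mul]

end SumBlocks

theorem stmt2_general (p : ℕ) (hp : p.Prime)
    (G : Type) [AddCommGroup G] [Fintype G] [DecidableEq G]
    (hpg : ∀ g : G, ∃ i : ℕ, p ^ i • g = 0)
    (k : ℕ) (hk2 : 2 ≤ k) (hkn : k ≤ Fintype.card G) (x : G)
    (hdes : isOneDesign G k x) : p ∣ k := by
  by_contra hpk
  obtain ⟨m, hcard⟩ := exists_card_eq_prime_pow_of_forall_nsmul_eq_zero hp hpg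
  have hcop : (p ^ m).Coprime k := ((hp.coprime_iff_not_dvd).mpr hpk).pow_left m
  have hsurj : Function.Surjective (k • · : G → G) :=
    (Nat.Coprime.nsmul_right_bijective (by rwa [Nat.card_eq_fintype_card, hcard])).surjective
  have hblocks : p ^ m ∣ #(sumBlocks G k x) :=
    hcop.dvd_of_dvd_mul_right (hcard ▸ hdes.card_dvd_mul)
  have hchoose : p ^ (m + m) ∣ (p ^ m).choose k := by
    rw [← hcard, ← card_mul_card_sumBlocks_of_surjective hsurj x, hcard, pow_add]
    exact mul_dvd_mul_left _ hblocks
  have hm : m + m ≤ m :=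
    (hp.pow_dvd_choose_prime_pow_iff hpk (by omega) (hcard ▸ hkn)).mp hchoose
  rw [show m = 0 by omega, pow_zero] at hcard
  omega

theorem stmt2 (p : ℕ) (hp : p.Prime) (hodd : Odd p)
    (G : Type) [AddCommGroup G] [Fintype G] [DecidableEq G]
    (hpg : ∀ g : G, ∃ i : ℕ, p ^ i • g = 0)
    (k : ℕ) (hk2 : 2 ≤ k) (hkn : k ≤ Fintype.card G) (x : G)
    (hdes : isOneDesign G k x) : p ∣ k :=
  stmt2_general p hp G hpg k hk2 hkn x hdes
end

section
/- Let p be an odd prime, G a finite abelian p-group with exponent p^{t_m}, and x ∈ G with x = 0. Then for 1 ≤ k < |G|, the incidence structure (G, B_k^0) is a 1-design if and only if p^{t_m} divides k, i.e., exp(G) divides k. -/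
open Finset

open Polynomial

/-!
Translating by `-y` matches the blocks through `y` with the `(k-1)`-subsets of `G \ {0}` of
sum `k • (-y)`. If `exp G ∣ k` this sum is always `0`, so all points lie on equally many blocks,
and blocks exist because every coset of a cyclic subgroup of odd order `q = exp G` sums to `0`.

Otherwise some `y` has `k • (-y) = v := p^t • c`, where `c` has order `q = p^(t+1)`, and it
suffices that `N(0) ≠ N(v)` for the numbers `N(x)` of `(k-1)`-subsets of `G \ {0}` of sum `x`.
By orthogonality, `|G| (N(0) - N(v))` is a sum over the characters `χ` with `χ v ≠ 1`. For
these `χ c` is a primitive `q`-th root of unity, `χ` takes every `q`-th root of unity `|G|/q`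
times, and so `∏_{g ≠ 0} (1 + χ(g) X) = (1 + X^q)^(|G|/q) / (1 + X)` since `q` is odd. Its
coefficients are `± (|G|/q - 1).choose _`, none of them zero below degree `|G|`.
-/

lemma coeff_prod_one_add_C_mul_X {R ι : Type*} [CommSemiring R] [DecidableEq ι] (s : Finset ι)
    (f : ι → R) (m : ℕ) :
    (∏ i ∈ s, (1 + C (f i) * X)).coeff m = ∑ t ∈ s.powersetCard m, ∏ i ∈ t, f i := by
  simp_rw [add_comm (1 : R[X]), prod_add, prod_const_one, mul_one, prod_mul_distrib, prod_const,
    ← map_prod, finsetSum_coeff, coeff_C_mul_X_pow, powersetCard_eq_filter, sum_filter, eq_comm]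

lemma prod_nthRootsFinset_one_add_C_mul_X {K : Type*} [Field K] [Infinite K] {ζ : K} {q : ℕ}
    (hζ : IsPrimitiveRoot ζ q) (hq : Odd q) :
    ∏ z ∈ nthRootsFinset q (1 : K), (1 + C z * X) = 1 + X ^ q := by
  refine Polynomial.funext fun r => ?_
  simp [eval_prod, ← hζ.pow_add_pow_eq_prod_add_mul 1 r hq]

lemma one_add_X_mul_sum_range_neg_X_pow {R : Type*} [CommRing R] {q : ℕ} (hq : Odd q) :
    (1 + X) * ∑ i ∈ range q, (-X : R[X]) ^ i = 1 + X ^ q := by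
  linear_combination -(geom_sum_mul (-X : R[X]) q) - X ^ q * hq.neg_one_pow (α := R[X])

lemma coeff_sum_range_neg_X_pow {R : Type*} [CommRing R] (q d : ℕ) :
    (∑ i ∈ range q, (-X : R[X]) ^ i).coeff d = if d < q then (-1 : R) ^ d else 0 := by
  simp_rw [neg_pow (X : R[X]), ← C_1, ← C_neg, ← C_pow, finsetSum_coeff, coeff_C_mul, coeff_X_pow,
    mul_ite, mul_one, mul_zero, sum_ite_eq, mem_range]

lemma coeff_sum_range_neg_X_pow_mul_one_add_X_pow_pow {R : Type*} [CommRing R] {q i : ℕ}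
    (hi : i < q) (N j : ℕ) :
    ((∑ l ∈ range q, (-X : R[X]) ^ l) * (1 + X ^ q) ^ N).coeff (q * j + i)
      = (-1 : R) ^ i * N.choose j := by
  have hcoeff : ∀ l, ((∑ l ∈ range q, (-X : R[X]) ^ l) * X ^ (q * l)).coeff (q * j + i)
      = if l = j then (-1 : R) ^ i else 0 := by
    intro l
    rw [coeff_mul_X_pow', coeff_sum_range_neg_X_pow]
    rcases lt_trichotomy l j with hlj | rfl | hlj
    · have : q * l + q ≤ q * j := by simpa [mul_add] using Nat.mul_le_mul_left q hlj
      simp [hlj.ne]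
      omega
    · simp [hi]
    · have : q * j + q ≤ q * l := by simpa [mul_add] using Nat.mul_le_mul_left q hlj
      simp [hlj.ne']
      omega
  rw [add_comm, add_pow, mul_sum, finsetSum_coeff]
  simp_rw [one_pow, mul_one, ← pow_mul, ← mul_assoc, coeff_mul_natCast, hcoeff, ite_mul, zero_mul,
    sum_ite_eq', mem_range]
  split_ifs with hj
  · rfl
  · rw [Nat.choose_eq_zero_of_lt (by omega), Nat.cast_zero, mul_zero]

lemma AddChar.map_sum_eq_prod {A M ι : Type*} [AddCommMonoid A] [CommMonoid M]
    (ψ : AddChar A M) (s : Finset ι) (f : ι → A) : ψ (∑ i ∈ s, f i) = ∏ i ∈ s, ψ (f i) :=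
  map_prod ψ.toMonoidHom (fun i => Multiplicative.ofAdd (f i)) s

lemma AddChar.apply_mem_nthRootsFinset {A : Type*} [AddMonoid A] (χ : AddChar A ℂ) {q : ℕ}
    (hq : 0 < q) {a : A} (ha : q • a = 0) : χ a ∈ nthRootsFinset q (1 : ℂ) := by
  rw [mem_nthRootsFinset hq, ← AddChar.map_nsmul_eq_pow, ha, AddChar.map_zero_eq_one]

lemma AddChar.card_filter_apply_eq {A : Type*} [AddCommGroup A] [Fintype A] (χ : AddChar A ℂ)
    (a : A) : #{x | χ x = χ a} = #{x | χ x = 1} := by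
  refine card_nbij' (· - a) (· + a) ?_ ?_ (fun _ _ => by simp) (fun _ _ => by simp) <;>
    intro x hx
  · simp_all [AddChar.map_sub_eq_div, (χ.val_isUnit a).ne_zero]
  · simp_all [AddChar.map_add_eq_mul]

lemma card_filter_addChar_eq_of_mem_nthRootsFinset {A : Type*} [AddCommGroup A] [Fintype A]
    {χ : AddChar A ℂ} {c : A} {q : ℕ} (hc : IsPrimitiveRoot (χ c) q) (hq : 0 < q) {z : ℂ}
    (hz : z ∈ nthRootsFinset q (1 : ℂ)) : #{g | χ g = z} = #{g | χ g = 1} := by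
  have := NeZero.of_pos hq
  obtain ⟨i, -, rfl⟩ := hc.eq_pow_of_pow_eq_one ((mem_nthRootsFinset hq 1).1 hz)
  rw [← AddChar.map_nsmul_eq_pow]
  exact χ.card_filter_apply_eq _

section PrimitiveCharacter

variable {G : Type*} [AddCommGroup G] [Fintype G] {q : ℕ}
  (hG : ∀ g : G, q • g = 0) {χ : AddChar G ℂ} {c : G} (hc : IsPrimitiveRoot (χ c) q)
include hG hc

lemma card_eq_mul_card_filter_addChar_eq_one (hq : 0 < q) :
    Fintype.card G = q * #{g | χ g = 1} := by
  rw [← card_univ, card_eq_sum_card_fiberwise fun g _ => χ.apply_mem_nthRootsFinset hq (hG g),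
    sum_congr rfl fun z hz => card_filter_addChar_eq_of_mem_nthRootsFinset hc hq hz,
    sum_const, hc.card_nthRootsFinset, smul_eq_mul]

lemma prod_one_add_C_addChar_mul_X (hq : Odd q) :
    ∏ g, (1 + C (χ g) * X) = (1 + X ^ q) ^ #{g | χ g = 1} := by
  rw [← prod_fiberwise_of_maps_to fun g _ => χ.apply_mem_nthRootsFinset hq.pos (hG g)]
  calc ∏ z ∈ nthRootsFinset q (1 : ℂ), ∏ g with χ g = z, (1 + C (χ g) * X)
      = ∏ z ∈ nthRootsFinset q (1 : ℂ), (1 + C z * X) ^ #{g | χ g = 1} := by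
        refine prod_congr rfl fun z hz => ?_
        rw [prod_congr rfl fun g hg => by rw [(mem_filter.1 hg).2], prod_const,
          card_filter_addChar_eq_of_mem_nthRootsFinset hc hq.pos hz]
    _ = (1 + X ^ q) ^ #{g | χ g = 1} := by
        rw [prod_pow, prod_nthRootsFinset_one_add_C_mul_X hc hq]

lemma sum_powersetCard_erase_zero_prod_addChar [DecidableEq G] (hq : Odd q) (m : ℕ) :
    ∑ S ∈ (univ.erase (0 : G)).powersetCard m, ∏ g ∈ S, χ g
      = (-1) ^ (m % q) * ((Fintype.card G / q - 1).choose (m / q) : ℂ) := by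
  set K := #{g | χ g = 1}
  have hK : 0 < K := card_pos.2 ⟨0, by simp⟩
  have hcard : Fintype.card G / q = K := by
    rw [card_eq_mul_card_filter_addChar_eq_one hG hc hq.pos, Nat.mul_div_cancel_left _ hq.pos]
  have hprod : ∏ g ∈ univ.erase 0, (1 + C (χ g) * X)
      = (∑ i ∈ range q, (-X : ℂ[X]) ^ i) * (1 + X ^ q) ^ (K - 1) := by
    refine mul_left_cancel₀ (by simpa [add_comm] using X_add_C_ne_zero (1 : ℂ)) ?_
    calc (1 + X) * ∏ g ∈ univ.erase 0, (1 + C (χ g) * X) = ∏ g, (1 + C (χ g) * X) := by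
          rw [← mul_prod_erase univ _ (mem_univ 0), AddChar.map_zero_eq_one, C_1, one_mul]
      _ = (1 + X) * ((∑ i ∈ range q, (-X : ℂ[X]) ^ i) * (1 + X ^ q) ^ (K - 1)) := by
          rw [prod_one_add_C_addChar_mul_X hG hc hq, ← mul_assoc,
            one_add_X_mul_sum_range_neg_X_pow hq, ← pow_succ', Nat.sub_add_cancel hK]
  conv_lhs => rw [← Nat.div_add_mod m q]
  rw [← coeff_prod_one_add_C_mul_X, hprod, hcard,
    coeff_sum_range_neg_X_pow_mul_one_add_X_pow_pow (Nat.mod_lt m hq.pos)]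

end PrimitiveCharacter

lemma exists_nsmul_eq_nsmul_of_gcd_dvd {G : Type*} [AddCommGroup G] (c : G) {k d : ℕ}
    (h : Nat.gcd k (addOrderOf c) ∣ d) : ∃ y : G, k • y = d • c := by
  obtain ⟨e, rfl⟩ := h
  refine ⟨(e * Nat.gcdA k (addOrderOf c)) • c, ?_⟩
  rw [← natCast_zsmul, ← natCast_zsmul, smul_smul, ← sub_eq_zero, ← sub_smul,
    ← addOrderOf_dvd_iff_zsmul_eq_zero]
  exact ⟨-(Nat.gcdB k (addOrderOf c) * e), by push_cast; rw [Nat.gcd_eq_gcd_ab]; ring⟩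

lemma Nat.gcd_dvd_pow_of_not_pow_succ_dvd {p t k : ℕ} (hp : p.Prime) (h : ¬p ^ (t + 1) ∣ k) :
    Nat.gcd k (p ^ (t + 1)) ∣ p ^ t := by
  obtain ⟨j, hj, hgcd⟩ := (Nat.dvd_prime_pow hp).1 (Nat.gcd_dvd_right k (p ^ (t + 1)))
  rw [hgcd]
  refine pow_dvd_pow p (Nat.le_of_lt_succ (hj.lt_of_ne ?_))
  rintro rfl
  exact h (hgcd ▸ Nat.gcd_dvd_left k _)

lemma sum_range_addOrderOf_nsmul {G : Type*} [AddCommGroup G] {c : G}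
    (hodd : Odd (addOrderOf c)) : ∑ i ∈ range (addOrderOf c), i • c = 0 := by
  obtain ⟨a, ha⟩ := hodd
  have hsum : ∑ i ∈ range (addOrderOf c), i = addOrderOf c * a := by
    have := sum_range_id_mul_two (addOrderOf c)
    rw [ha] at this ⊢
    simp only [add_tsub_cancel_right] at this
    linarith
  rw [← sum_smul, hsum, mul_nsmul, addOrderOf_nsmul_eq_zero, nsmul_zero]

lemma exists_card_eq_sum_eq_zero {G : Type*} [AddCommGroup G] [Fintype G] [DecidableEq G]
    (hodd : Odd (AddMonoid.exponent G)) {k : ℕ} (hk : AddMonoid.exponent G ∣ k)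
    (hkn : k ≤ Fintype.card G) :
    ∃ T : Finset G, #T = k ∧ T.sum id = 0 := by
  obtain ⟨c, hc⟩ := AddMonoid.exists_addOrderOf_eq_exponent
    (AddMonoid.ExponentExists.of_finite (G := G))
  rw [← hc] at hodd hk
  have hexp (g : G) : addOrderOf c • g = 0 := hc ▸ AddMonoid.exponent_nsmul_eq_zero g
  set H := AddSubgroup.zmultiples c
  have hcard : Nat.card (G ⧸ H) * addOrderOf c = Fintype.card G := by
    rw [← Nat.card_zmultiples, ← Nat.card_eq_fintype_card,
      ← AddSubgroup.card_eq_card_quotient_mul_card_addSubgroup]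
  have : Fintype (G ⧸ H) := Fintype.ofFinite _
  obtain ⟨Q, -, hQ⟩ := exists_subset_card_eq (s := (univ : Finset (G ⧸ H)))
    (n := k / addOrderOf c) (by
      rw [card_univ, ← Nat.card_eq_fintype_card,
        ← Nat.mul_div_cancel (Nat.card (G ⧸ H)) (addOrderOf_pos c), hcard]
      exact Nat.div_le_div_right hkn)
  have hmk (z : G ⧸ H) (i : ℕ) : ((z.out + i • c : G) : G ⧸ H) = z := by
    rw [QuotientAddGroup.mk_add, QuotientAddGroup.out_eq',
      (QuotientAddGroup.eq_zero_iff _).2 (AddSubgroup.nsmul_mem_zmultiples c i), add_zero]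
  have hinj : Set.InjOn (fun zi : (G ⧸ H) × ℕ => zi.1.out + zi.2 • c)
      ↑(Q ×ˢ range (addOrderOf c)) := by
    rintro ⟨z, i⟩ hzi ⟨z', i'⟩ hzi' h
    simp only [coe_product, Set.mem_prod, mem_coe, mem_range] at hzi hzi' h
    obtain rfl : z = z' := by rw [← hmk z i, ← hmk z' i', h]
    rw [add_right_inj, nsmul_injOn_Iio_addOrderOf.eq_iff hzi.2 hzi'.2] at h
    rw [h]
  -- `T` is the union of the `k / q` cosets `z.out + ⟨c⟩`, `z ∈ Q`.
  refine ⟨(Q ×ˢ range (addOrderOf c)).image fun zi => zi.1.out + zi.2 • c, ?_, ?_⟩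
  · rw [card_image_of_injOn hinj, card_product, card_range, hQ, Nat.div_mul_cancel hk]
  · rw [sum_image hinj, sum_product]
    simp [sum_add_distrib, sum_range_addOrderOf_nsmul hodd, hexp]

section Blocks

variable {G : Type} [AddCommGroup G] [Fintype G] [DecidableEq G]

lemma card_filter_mem_sumBlocks_add (k : ℕ) (x y c : G) :
    #{B ∈ sumBlocks G k (x + k • c) | y + c ∈ B} = #{B ∈ sumBlocks G k x | y ∈ B} := by
  refine card_nbij' (·.map (Equiv.addRight (-c)).toEmbedding)
    (·.map (Equiv.addRight c).toEmbedding) ?_ ?_ ?_ ?_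
  all_goals intro T hT
  · simp_all [sumBlocks, sum_add_distrib]
  · simp_all [sumBlocks, sum_add_distrib]
  · ext; simp
  · ext; simp

lemma card_filter_zero_mem_sumBlocks (m : ℕ) (x : G) :
    #{B ∈ sumBlocks G (m + 1) x | 0 ∈ B} = #(sumBlocksStar G m x) := by
  refine card_nbij' (·.erase 0) (insert 0) ?_ ?_ ?_ ?_
  all_goals intro T hT; simp_all [sumBlocks, sumBlocksStar, card_erase_of_mem]

lemma card_filter_mem_sumBlocks_zero (m : ℕ) (y : G) :
    #{B ∈ sumBlocks G (m + 1) 0 | y ∈ B} = #(sumBlocksStar G m ((m + 1) • -y)) := by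
  rw [← card_filter_zero_mem_sumBlocks, ← card_filter_mem_sumBlocks_add (m + 1) 0 y (-y),
    zero_add, add_neg_cancel]

lemma sumBlocksStar_eq_filter_powersetCard (m : ℕ) (x : G) :
    sumBlocksStar G m x = {S ∈ (univ.erase (0 : G)).powersetCard m | S.sum id = x} := by
  ext S
  simp [sumBlocksStar, mem_powersetCard, subset_erase]
  tauto

lemma card_mul_card_filter_sum_eq (F : Finset (Finset G)) (x : G) :
    (Fintype.card G : ℂ) * #{S ∈ F | S.sum id = x}
      = ∑ χ : AddChar G ℂ, χ (-x) * ∑ S ∈ F, ∏ g ∈ S, χ g := by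
  calc (Fintype.card G : ℂ) * #{S ∈ F | S.sum id = x}
      = ∑ S ∈ F, ∑ χ : AddChar G ℂ, χ (S.sum id - x) := by
        simp_rw [AddChar.sum_apply_eq_ite, sub_eq_zero, sum_ite, sum_const_zero, add_zero,
          sum_const, nsmul_eq_mul, mul_comm]
    _ = ∑ χ : AddChar G ℂ, χ (-x) * ∑ S ∈ F, ∏ g ∈ S, χ g := by
        rw [sum_comm]
        refine sum_congr rfl fun χ _ => ?_
        rw [mul_sum]
        refine sum_congr rfl fun S _ => ?_
        rw [sub_eq_neg_add, AddChar.map_add_eq_mul, AddChar.map_sum_eq_prod]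
        rfl

theorem card_sumBlocksStar_zero_sub_card_sumBlocksStar {p t : ℕ} (hp : p.Prime) (hodd : Odd p)
    (hexp : AddMonoid.exponent G = p ^ (t + 1)) {c : G} (hv : p ^ t • c ≠ 0) (m : ℕ) :
    (#(sumBlocksStar G m 0) : ℂ) - #(sumBlocksStar G m (p ^ t • c))
      = (-1) ^ (m % p ^ (t + 1))
        * ((Fintype.card G / p ^ (t + 1) - 1).choose (m / p ^ (t + 1)) : ℂ) := by
  have := Fact.mk hp
  set q := p ^ (t + 1)
  set v := p ^ t • c
  set e : ℂ := (-1) ^ (m % q) * ((Fintype.card G / q - 1).choose (m / q) : ℂ)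
  have hG (g : G) : q • g = 0 := hexp ▸ AddMonoid.exponent_nsmul_eq_zero g
  have hterm (χ : AddChar G ℂ) : (1 - χ (-v)) * ∑ S ∈ (univ.erase 0).powersetCard m, ∏ g ∈ S, χ g
      = (1 - χ (-v)) * e := by
    by_cases hχ : χ v = 1
    · rw [AddChar.map_neg_eq_inv, hχ, inv_one, sub_self, zero_mul, zero_mul]
    · have hord : orderOf (χ c) = q := orderOf_eq_prime_pow
        (by rwa [← AddChar.map_nsmul_eq_pow])
        (by rw [← AddChar.map_nsmul_eq_pow, hG, AddChar.map_zero_eq_one])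
      rw [sum_powersetCard_erase_zero_prod_addChar hG (hord ▸ IsPrimitiveRoot.orderOf _)
        hodd.pow m]
  refine mul_left_cancel₀ (Nat.cast_ne_zero.2 Fintype.card_ne_zero : (Fintype.card G : ℂ) ≠ 0) ?_
  calc (Fintype.card G : ℂ) * (#(sumBlocksStar G m 0) - #(sumBlocksStar G m v))
      = ∑ χ : AddChar G ℂ, (1 - χ (-v)) * ∑ S ∈ (univ.erase 0).powersetCard m, ∏ g ∈ S, χ g := by
        simp_rw [mul_sub, sumBlocksStar_eq_filter_powersetCard, card_mul_card_filter_sum_eq,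
          ← sum_sub_distrib, neg_zero, AddChar.map_zero_eq_one, sub_mul]
    _ = ∑ χ : AddChar G ℂ, (1 - χ (-v)) * e := sum_congr rfl fun χ _ => hterm χ
    _ = Fintype.card G * e := by
        rw [← sum_mul, sum_sub_distrib, AddChar.sum_apply_eq_ite, if_neg (neg_ne_zero.2 hv),
          sum_const, card_univ, AddChar.card_eq, nsmul_one, sub_zero]

theorem card_sumBlocksStar_ne {p t : ℕ} (hp : p.Prime) (hodd : Odd p)
    (hexp : AddMonoid.exponent G = p ^ (t + 1)) {c : G} (hv : p ^ t • c ≠ 0) {m : ℕ}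
    (hm : m < Fintype.card G) : #(sumBlocksStar G m (p ^ t • c)) ≠ #(sumBlocksStar G m 0) := by
  intro h
  have hdiff := card_sumBlocksStar_zero_sub_card_sumBlocksStar hp hodd hexp hv m
  have hdvd : p ^ (t + 1) ∣ Fintype.card G := hexp ▸ AddGroup.exponent_dvd_card
  have hlt : m / p ^ (t + 1) < Fintype.card G / p ^ (t + 1) := Nat.div_lt_div_of_lt_of_dvd hdvd hm
  rw [h, sub_self, eq_comm, mul_eq_zero] at hdiff
  exact hdiff.elim (pow_ne_zero _ (neg_ne_zero.2 one_ne_zero))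
    (Nat.cast_ne_zero.2 (Nat.choose_pos (by omega)).ne')

lemma isOneDesign_zero_of_exponent_dvd (hodd : Odd (AddMonoid.exponent G)) {k : ℕ}
    (hk : AddMonoid.exponent G ∣ k) (hkn : k ≤ Fintype.card G) : isOneDesign G k 0 := by
  obtain ⟨T, hT⟩ := exists_card_eq_sum_eq_zero hodd hk hkn
  refine ⟨ne_empty_of_mem (s := sumBlocks G k 0) (a := T) (by simpa [sumBlocks] using hT),
    #{B ∈ sumBlocks G k 0 | 0 ∈ B}, fun y => ?_⟩
  have hky : k • -y = 0 := by
    obtain ⟨j, rfl⟩ := hk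
    rw [mul_comm, mul_nsmul, AddMonoid.exponent_nsmul_eq_zero]
  rw [← card_filter_mem_sumBlocks_add k 0 y (-y), hky, add_zero, add_neg_cancel]

lemma pow_dvd_of_isOneDesign_zero {p tm : ℕ} (hp : p.Prime) (hodd : Odd p)
    (hexp : AddMonoid.exponent G = p ^ tm) {m : ℕ} (hm : m < Fintype.card G)
    (h : isOneDesign G (m + 1) 0) : p ^ tm ∣ m + 1 := by
  obtain ⟨-, r, hr⟩ := h
  by_contra hdvd
  obtain ⟨t, rfl⟩ : ∃ t, tm = t + 1 := ⟨tm - 1, by cases tm <;> simp_all⟩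
  obtain ⟨c, hc⟩ := AddMonoid.exists_addOrderOf_eq_exponent
    (AddMonoid.ExponentExists.of_finite (G := G))
  rw [hexp] at hc
  obtain ⟨y, hy⟩ := exists_nsmul_eq_nsmul_of_gcd_dvd c
    (hc ▸ Nat.gcd_dvd_pow_of_not_pow_succ_dvd hp hdvd)
  have hv : p ^ t • c ≠ 0 := nsmul_ne_zero_of_lt_addOrderOf (pow_ne_zero _ hp.ne_zero)
    (hc ▸ Nat.pow_lt_pow_right hp.one_lt t.lt_succ_self)
  apply card_sumBlocksStar_ne hp hodd hexp hv hm
  have h0 := hr 0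
  have hy' := hr (-y)
  rw [card_filter_mem_sumBlocks_zero, neg_zero, smul_zero] at h0
  rw [card_filter_mem_sumBlocks_zero, neg_neg, hy] at hy'
  rw [hy', h0]

end Blocks

theorem stmt5 (p tm : ℕ) (hp : p.Prime) (hodd : Odd p)
    (G : Type) [AddCommGroup G] [Fintype G] [DecidableEq G]
    (hexp : AddMonoid.exponent G = p ^ tm)
    (k : ℕ) (hk1 : 1 ≤ k) (hkn : k < Fintype.card G) :
    isOneDesign G k (0 : G) ↔ p ^ tm ∣ k := by
  obtain ⟨m, rfl⟩ : ∃ m, k = m + 1 := ⟨k - 1, by omega⟩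
  refine ⟨pow_dvd_of_isOneDesign_zero hp hodd hexp (by omega), fun hk => ?_⟩
  exact isOneDesign_zero_of_exponent_dvd (hexp ▸ hodd.pow) (hexp ▸ hk) hkn.le
end

section
/- Let G = F_p^m, p an odd prime, and k with p | k, 2 ≤ k ≤ p^m such that B_k^0 is nonempty. Then (G, B_k^0) is a 2-design, i.e., any two distinct points of G are contained in the same number of k-subsets of G that sum to 0. -/
open Finset

/-!
An affine permutation `g = L + t` of a vector space `V` sends a `k`-subset `B` to a `k`-subset with
sum `L (∑ B) + k • t`, so when the characteristic divides `k` it permutes the blocks summing to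
`0`. The affine group of `V` is `2`-transitive, hence any two pairs of distinct points lie in
equally many blocks.
-/

lemma card_filter_subset_map_eq {α : Type*} [DecidableEq α] (𝓑 : Finset (Finset α)) (e : α ≃ α)
    (he : ∀ B, B.map e.toEmbedding ∈ 𝓑 ↔ B ∈ 𝓑) (S : Finset α) :
    #{B ∈ 𝓑 | S.map e.toEmbedding ⊆ B} = #{B ∈ 𝓑 | S ⊆ B} := by
  refine card_nbij' (·.map e.symm.toEmbedding) (·.map e.toEmbedding) ?_ ?_ ?_ ?_
  · intro B hB
    simp only [coe_filter, Set.mem_ofPred_eq] at hB ⊢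
    refine ⟨by rw [← he, map_map]; simpa using hB.1, ?_⟩
    simpa [map_map] using (map_subset_map (f := e.symm.toEmbedding)).2 hB.2
  · intro B hB
    simp only [coe_filter, Set.mem_ofPred_eq] at hB ⊢
    exact ⟨(he B).2 hB.1, map_subset_map.2 hB.2⟩
  · intro B _
    simp [map_map]
  · intro B _
    simp [map_map]

section Transitivity

variable {K V : Type*} [DivisionRing K] [AddCommGroup V] [Module K V]

lemma LinearEquiv.exists_apply_eq_of_ne_zero {u v : V} (hu : u ≠ 0) (hv : v ≠ 0) :
    ∃ L : V ≃ₗ[K] V, L u = v := by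
  let f := (toSpanNonzeroSingleton K V u hu).symm ≪≫ₗ toSpanNonzeroSingleton K V v hv
  obtain ⟨L, hL⟩ := Submodule.exists_linearEquiv_restrict_eq f
  refine ⟨L, ?_⟩
  have hu1 :
      (toSpanNonzeroSingleton K V u hu).symm ⟨u, Submodule.mem_span_singleton_self u⟩ = 1 := by
    rw [LinearEquiv.symm_apply_eq, toSpanNonzeroSingleton_one]
  rw [← hL ⟨u, Submodule.mem_span_singleton_self u⟩]
  simp [f, hu1]

lemma AffineEquiv.exists_apply_eq_apply_eq {a b c d : V} (hab : a ≠ b) (hcd : c ≠ d) :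
    ∃ g : V ≃ᵃ[K] V, g a = c ∧ g b = d := by
  obtain ⟨L, hL⟩ := LinearEquiv.exists_apply_eq_of_ne_zero (K := K)
    (sub_ne_zero.2 hab.symm) (sub_ne_zero.2 hcd.symm)
  refine ⟨L.toAffineEquiv.trans (AffineEquiv.constVAdd K V (c - L a)), by simp, ?_⟩
  calc (L.toAffineEquiv.trans (AffineEquiv.constVAdd K V (c - L a))) b = c + L (b - a) := by
        simp only [AffineEquiv.trans_apply, LinearEquiv.coe_toAffineEquiv,
          AffineEquiv.constVAdd_apply, vadd_eq_add, map_sub]; abel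
    _ = d := by rw [hL, add_sub_cancel]

end Transitivity

lemma AffineEquiv.sum_finset_map {K V : Type*} [Ring K] [AddCommGroup V] [Module K V]
    (g : V ≃ᵃ[K] V) (B : Finset V) :
    (B.map g.toEquiv.toEmbedding).sum id = g.linear (B.sum id) + #B • g 0 := by
  calc (B.map g.toEquiv.toEmbedding).sum id = ∑ x ∈ B, (g.linear x + g 0) := by
        rw [Finset.sum_map]; exact sum_congr rfl fun x _ => congrFun g.toAffineMap.decomp x
    _ = g.linear (B.sum id) + #B • g 0 := by rw [sum_add_distrib, ← map_sum, sum_const]; rfl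

section SumBlocks

variable {K V : Type} [AddCommGroup V] [Fintype V] [DecidableEq V] {k : ℕ}

lemma AffineEquiv.map_mem_sumBlocks_zero_iff [Ring K] [Module K V] (hk : (k : K) = 0)
    (g : V ≃ᵃ[K] V) (B : Finset V) :
    B.map g.toEquiv.toEmbedding ∈ sumBlocks V k 0 ↔ B ∈ sumBlocks V k 0 := by
  simp only [sumBlocks, mem_filter, mem_univ, true_and, card_map]
  refine and_congr_right fun hB => ?_
  have hkg : k • g 0 = 0 := by rw [← Nat.cast_smul_eq_nsmul K, hk, zero_smul]
  rw [g.sum_finset_map, hB, hkg, add_zero, LinearEquiv.map_eq_zero_iff]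

variable [DivisionRing K] [Module K V]

lemma card_sumBlocks_filter_subset_eq_of_card_eq_two (hk : (k : K) = 0) {S T : Finset V}
    (hS : #S = 2) (hT : #T = 2) :
    #{B ∈ sumBlocks V k 0 | S ⊆ B} = #{B ∈ sumBlocks V k 0 | T ⊆ B} := by
  obtain ⟨a, b, hab, rfl⟩ := card_eq_two.1 hS
  obtain ⟨c, d, hcd, rfl⟩ := card_eq_two.1 hT
  obtain ⟨g, hga, hgb⟩ := AffineEquiv.exists_apply_eq_apply_eq (K := K) hab hcd
  have hST : ({a, b} : Finset V).map g.toEquiv.toEmbedding = {c, d} := by simp [hga, hgb]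
  rw [← hST, card_filter_subset_map_eq _ _ (g.map_mem_sumBlocks_zero_iff hk)]

theorem exists_card_sumBlocks_filter_subset_eq (hk : (k : K) = 0) :
    ∃ lam : ℕ, ∀ S : Finset V, #S = 2 → #{B ∈ sumBlocks V k 0 | S ⊆ B} = lam := by
  by_cases hpair : ∃ S₀ : Finset V, #S₀ = 2
  · obtain ⟨S₀, hS₀⟩ := hpair
    exact ⟨_, fun S hS => card_sumBlocks_filter_subset_eq_of_card_eq_two hk hS hS₀⟩
  · exact ⟨0, fun S hS => (hpair ⟨S, hS⟩).elim⟩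

end SumBlocks

theorem stmt7_general (p m : ℕ) (hp : p.Prime) [NeZero p]
    (k : ℕ) (hpk : p ∣ k) :
    ∃ lam : ℕ, ∀ S : Finset (Fin m → ZMod p), S.card = 2 →
      ((sumBlocks (Fin m → ZMod p) k 0).filter (fun B => S ⊆ B)).card = lam := by
  have : Fact p.Prime := ⟨hp⟩
  exact exists_card_sumBlocks_filter_subset_eq ((ZMod.natCast_eq_zero_iff k p).2 hpk)

theorem stmt7 (p m : ℕ) (hp : p.Prime) (hodd : Odd p) [NeZero p]
    (k : ℕ) (hk2 : 2 ≤ k) (hkn : k ≤ p ^ m) (hpk : p ∣ k)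
    (hne : sumBlocks (Fin m → ZMod p) k 0 ≠ ∅) :
    ∃ lam : ℕ, ∀ S : Finset (Fin m → ZMod p), S.card = 2 →
      ((sumBlocks (Fin m → ZMod p) k 0).filter (fun B => S ⊆ B)).card = lam :=
  stmt7_general p m hp k hpk
end

section
/- Let n be a positive integer, q the largest prime factor of n with ν_q(n) = t, and suppose n ≤ q^{2t} - 1. Then for any integer k with 1 ≤ k ≤ n and gcd(k, n) = 1, n² does not divide the binomial coefficient C(n, k). -/
open Finset

/-!
By Legendre's formula, `ν_q (C(n, k))` counts the indices `i` with a carry at `q ^ i`, and there is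
none once `q ^ i > n`; so `ν_q (C(n, k)) ≤ log_q n < 2t`. On the other hand `q ^ (2t) ∣ n²`.
-/

theorem Nat.not_pow_dvd_choose_of_lt_pow {p n k m : ℕ} (hp : p.Prime) (hn : n ≠ 0) (hkn : k ≤ n)
    (hlt : n < p ^ m) : ¬ p ^ m ∣ n.choose k := by
  intro hdvd
  have hm : m ≤ (n.choose k).factorization p :=
    (hp.pow_dvd_iff_le_factorization (Nat.choose_pos hkn).ne').1 hdvd
  have hlog : Nat.log p n < m := Nat.log_lt_of_lt_pow hn hlt
  exact (hm.trans Nat.factorization_choose_le_log).not_gt hlog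

theorem stmt8_general (n q t k : ℕ) (hn : 0 < n) (hq : q.Prime)
    (ht : n.factorization q = t)
    (hle : n ≤ q ^ (2 * t) - 1)
    (hkn : k ≤ n) :
    ¬ (n ^ 2 ∣ n.choose k) := by
  intro hdvd
  have hqt : q ^ t ∣ n := ht ▸ Nat.ordProj_dvd n q
  have hq2t : q ^ (2 * t) ∣ n ^ 2 := pow_mul' q 2 t ▸ pow_dvd_pow_of_dvd hqt 2
  exact Nat.not_pow_dvd_choose_of_lt_pow hq hn.ne' hkn
    (Nat.lt_of_le_sub_one (pow_pos hq.pos _) hle) (hq2t.trans hdvd)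

theorem stmt8 (n q t k : ℕ) (hn : 0 < n) (hq : q.Prime) (hqn : q ∣ n)
    (hmax : ∀ r : ℕ, r.Prime → r ∣ n → r ≤ q)
    (ht : n.factorization q = t)
    (hle : n ≤ q ^ (2 * t) - 1)
    (hk1 : 1 ≤ k) (hkn : k ≤ n) (hgcd : Nat.gcd k n = 1) :
    ¬ (n ^ 2 ∣ n.choose k) :=
  stmt8_general n q t k hn hq ht hle hkn
end

section
/- Let G = Z_n, 2 ≤ k ≤ n-1, and x₁, x₂ ∈ Z_n with gcd(x₁, n) = gcd(x₂, n). Then (Z_n, B_k^{x₁}) is a 1-design if and only if (Z_n, B_k^{x₂}) is a 1-design. -/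
open Finset

/-!
An additive isomorphism `e : G ≃+ H` maps the `k`-subsets of `G` with sum `x` bijectively onto
the `k`-subsets of `H` with sum `e x`, and `y ∈ B ↔ e y ∈ e(B)`, so it carries the 1-design
property of `B_k^x` to that of `B_k^{e x}`. In `ZMod n`, writing each element as a unit times
the gcd of its value with `n` shows that elements with the same gcd differ by a unit factor `u`,
and multiplication by `u` is such an isomorphism.
-/

section Transport

variable {G H : Type} [AddCommGroup G] [Fintype G] [DecidableEq G]
  [AddCommGroup H] [Fintype H] [DecidableEq H] (e : G ≃+ H) (k : ℕ) (x : G)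

theorem sumBlocks_map_addEquiv :
    (sumBlocks G k x).map e.toEquiv.finsetCongr.toEmbedding = sumBlocks H k (e x) := by
  ext B
  rw [Finset.mem_map_equiv, Equiv.finsetCongr_symm, Equiv.finsetCongr_apply]
  simp only [sumBlocks, Finset.mem_filter, Finset.mem_univ, true_and, Finset.card_map,
    Finset.sum_map, id_eq]
  rw [← e.symm_apply_eq]
  simp [map_sum]

theorem card_filter_mem_sumBlocks_addEquiv (y : G) :
    ((sumBlocks H k (e x)).filter (e y ∈ ·)).card = ((sumBlocks G k x).filter (y ∈ ·)).card := by
  rw [← sumBlocks_map_addEquiv, Finset.filter_map, Finset.card_map]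
  congr 2
  ext B
  simp

theorem isOneDesign_addEquiv_iff : isOneDesign H k (e x) ↔ isOneDesign G k x := by
  simp only [isOneDesign, e.surjective.forall, card_filter_mem_sumBlocks_addEquiv]
  rw [← sumBlocks_map_addEquiv e, ne_eq, Finset.map_eq_empty]

end Transport

namespace ZMod

variable {n : ℕ}

theorem gcd_val_unit_mul_natCast (u : (ZMod n)ˣ) (d : ℕ) :
    ((u : ZMod n) * d).val.gcd n = d.gcd n := by
  rw [val_mul, ← Nat.gcd_rec, Nat.gcd_comm,
    Nat.Coprime.gcd_mul_left_cancel _ (val_coe_unit_coprime u), val_natCast,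
    ← Nat.gcd_rec, Nat.gcd_comm]

theorem exists_unit_mul_natCast_gcd_val (a : ZMod n) :
    ∃ u : (ZMod n)ˣ, a = u * (a.val.gcd n : ℕ) := by
  obtain ⟨d, hdn, _, ⟨u, rfl⟩, rfl⟩ := eq_unit_mul_divisor a
  rw [gcd_val_unit_mul_natCast, Nat.gcd_eq_left hdn]
  exact ⟨u, rfl⟩

theorem exists_unit_mul_eq_of_gcd_val_eq {a b : ZMod n} (h : a.val.gcd n = b.val.gcd n) :
    ∃ u : (ZMod n)ˣ, b = u * a := by
  obtain ⟨u, ha⟩ := exists_unit_mul_natCast_gcd_val a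
  obtain ⟨v, hb⟩ := exists_unit_mul_natCast_gcd_val b
  refine ⟨v * u⁻¹, ?_⟩
  rw [hb, ha, ← h, Units.val_mul, mul_assoc, Units.inv_mul_cancel_left]

end ZMod

theorem stmt10_general (n k : ℕ) [NeZero n]
    (x₁ x₂ : ZMod n) (hg : Nat.gcd x₁.val n = Nat.gcd x₂.val n) :
    isOneDesign (ZMod n) k x₁ ↔ isOneDesign (ZMod n) k x₂ := by
  obtain ⟨u, rfl⟩ := ZMod.exists_unit_mul_eq_of_gcd_val_eq hg
  exact (isOneDesign_addEquiv_iff (DistribMulAction.toAddEquiv (ZMod n) u) k x₁).symm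

theorem stmt10 (n k : ℕ) [NeZero n] (hk2 : 2 ≤ k) (hkn : k ≤ n - 1)
    (x₁ x₂ : ZMod n) (hg : Nat.gcd x₁.val n = Nat.gcd x₂.val n) :
    isOneDesign (ZMod n) k x₁ ↔ isOneDesign (ZMod n) k x₂ :=
  stmt10_general n k x₁ x₂ hg
end

section
/- Let G be a finite abelian group of order n, k an integer with exp(G) | k and k < n, and x ∈ G. If both (G \ {0}, B_k^{x,*}) and (G, B_k^x) are (t-1)-designs with t ≥ 2, then (G, B_k^x) is a t-design. -/
open Finset

/-- `(G, B_k^x)` is a `t`-design. -/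
def isDesign (G : Type) [AddCommGroup G] [Fintype G] [DecidableEq G]
    (t k : ℕ) (x : G) : Prop :=
  sumBlocks G k x ≠ ∅ ∧ ∃ lam : ℕ, ∀ S : Finset G, S.card = t →
    ((sumBlocks G k x).filter (fun B => S ⊆ B)).card = lam

/-- `(G \ {0}, B_k^{x,*})` is a `t`-design. -/
def isDesignStar (G : Type) [AddCommGroup G] [Fintype G] [DecidableEq G]
    (t k : ℕ) (x : G) : Prop :=
  sumBlocksStar G k x ≠ ∅ ∧ ∃ lam : ℕ, ∀ S : Finset G, S.card = t → (0 : G) ∉ S →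
    ((sumBlocksStar G k x).filter (fun B => S ⊆ B)).card = lam

/-!
Since `exp(G) ∣ k`, every translate of a block of `B_k^x` is again a block, so a `t`-set `S`
lies in as many blocks as its translate `S - s` (`s ∈ S`), which has the form `insert 0 T`
with `|T| = t - 1`. The blocks through `T` are those through `insert 0 T` together with those
avoiding `0`, i.e. the blocks of `B_k^{x,*}` through `T`; hence `S` lies in `λ_{t-1} - λ*_{t-1}`
blocks.
-/

section Translation

variable {G : Type} [AddCommGroup G] [Fintype G] [DecidableEq G] {k : ℕ}

lemma image_add_right_mem_sumBlocks (hdvd : AddMonoid.exponent G ∣ k) {x : G} (c : G)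
    {B : Finset G} (hB : B ∈ sumBlocks G k x) : B.image (· + c) ∈ sumBlocks G k x := by
  simp only [sumBlocks, mem_filter, mem_univ, true_and] at hB ⊢
  obtain ⟨hcard, hsum⟩ := hB
  refine ⟨by rw [card_image_of_injective _ (add_left_injective c), hcard], ?_⟩
  rw [sum_image (add_left_injective c).injOn]
  simp only [id_eq, sum_add_distrib, sum_const, hcard] at hsum ⊢
  rw [hsum, AddMonoid.exponent_dvd_iff_forall_nsmul_eq_zero.1 hdvd c, add_zero]

lemma card_filter_subset_sumBlocks_image_sub (hdvd : AddMonoid.exponent G ∣ k) (x c : G)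
    (S : Finset G) :
    ((sumBlocks G k x).filter (S.image (· - c) ⊆ ·)).card =
      ((sumBlocks G k x).filter (S ⊆ ·)).card := by
  have image_sub_add (A : Finset G) : (A.image (· - c)).image (· + c) = A := by
    rw [image_image]; simp [Function.comp_def]
  have image_add_sub (A : Finset G) : (A.image (· + c)).image (· - c) = A := by
    rw [image_image]; simp [Function.comp_def]
  refine card_nbij' (·.image (· + c)) (·.image (· - c)) ?_ ?_ ?_ ?_
  · intro B hB
    simp only [coe_filter, Set.mem_ofPred_eq] at hB ⊢
    refine ⟨image_add_right_mem_sumBlocks hdvd c hB.1, ?_⟩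
    simpa only [image_sub_add] using image_subset_image (f := (· + c)) hB.2
  · intro B hB
    simp only [coe_filter, Set.mem_ofPred_eq] at hB ⊢
    refine ⟨by simpa only [sub_eq_add_neg] using image_add_right_mem_sumBlocks hdvd (-c) hB.1,
      image_subset_image hB.2⟩
  · intro B _
    exact image_add_sub B
  · intro B _
    exact image_sub_add B

end Translation

lemma card_filter_subset_sumBlocks_eq_add {G : Type} [AddCommGroup G] [Fintype G]
    [DecidableEq G] (k : ℕ) (x : G) (T : Finset G) :
    ((sumBlocks G k x).filter (T ⊆ ·)).card =
      ((sumBlocks G k x).filter (insert 0 T ⊆ ·)).card +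
        ((sumBlocksStar G k x).filter (T ⊆ ·)).card := by
  rw [← card_filter_add_card_filter_not (fun B => (0 : G) ∈ B), filter_filter,
    filter_filter]
  congr 2
  · ext B
    simp only [mem_filter, insert_subset_iff]
    tauto
  · ext B
    simp only [sumBlocks, sumBlocksStar, mem_filter, mem_univ, true_and]
    tauto

theorem stmt13_general (G : Type) [AddCommGroup G] [Fintype G] [DecidableEq G]
    (k : ℕ) (hdvd : AddMonoid.exponent G ∣ k)
    (x : G) (t : ℕ) (ht : 2 ≤ t)
    (hstar : isDesignStar G (t - 1) k x) (hfull : isDesign G (t - 1) k x) :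
    isDesign G t k x := by
  obtain ⟨hne, lam, hlam⟩ := hfull
  obtain ⟨-, lamStar, hlamStar⟩ := hstar
  refine ⟨hne, lam - lamStar, fun S hS => ?_⟩
  obtain ⟨s, hs⟩ : S.Nonempty := by rw [← card_pos, hS]; omega
  set S₀ := S.image (· - s)
  have h0 : (0 : G) ∈ S₀ := mem_image.2 ⟨s, hs, sub_self s⟩
  set T := S₀.erase 0
  have hT : T.card = t - 1 := by
    rw [card_erase_of_mem h0, card_image_of_injective _ (sub_left_injective (b := s)), hS]
  have hsplit := card_filter_subset_sumBlocks_eq_add k x T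
  rw [insert_erase h0, hlam T hT, hlamStar T hT (notMem_erase 0 S₀),
    card_filter_subset_sumBlocks_image_sub hdvd x s S] at hsplit
  omega

theorem stmt13 (G : Type) [AddCommGroup G] [Fintype G] [DecidableEq G]
    (k : ℕ) (hdvd : AddMonoid.exponent G ∣ k) (hkn : k < Fintype.card G)
    (x : G) (t : ℕ) (ht : 2 ≤ t)
    (hstar : isDesignStar G (t - 1) k x) (hfull : isDesign G (t - 1) k x) :
    isDesign G t k x :=
  stmt13_general G k hdvd x t ht hstar hfull
end

section
/- Let G be a finite abelian group of order n. For any 1 ≤ k ≤ n-1 and x ∈ G, the family B_k^x of k-subsets of G summing to x is empty if and only if: (k = 2, exp(G) = 2, x = 0), or (k = n-2 ≥ 2, exp(G) = 2, x = 0). -/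
open Finset

set_option linter.unusedSectionVars false
set_option maxHeartbeats 1000000


section Aux
variable {G : Type} [AddCommGroup G] [Fintype G] [DecidableEq G]

def shf (δ : G) (T : Finset G) : Finset G := T.image (· + δ)

lemma mem_shf {δ : G} {T : Finset G} {a : G} : a ∈ shf δ T ↔ a - δ ∈ T := by
  simp only [shf, mem_image]
  constructor
  · rintro ⟨b, hb, rfl⟩; simpa using hb
  · intro h; exact ⟨a - δ, h, by abel⟩

lemma shf_card (δ : G) (T : Finset G) : (shf δ T).card = T.card :=
  Finset.card_image_of_injective _ (add_left_injective δ)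

lemma shf_eq_of_subset {δ : G} {T : Finset G} (h : ∀ t ∈ T, t + δ ∈ T) : shf δ T = T := by
  apply Finset.eq_of_subset_of_card_le
  · intro a ha
    rw [mem_shf] at ha
    have := h _ ha
    simpa using this
  · rw [shf_card]

lemma shf_mem {δ : G} {T : Finset G} {t : G} (hT : shf δ T = T) (ht : t ∈ T) : t + δ ∈ T := by
  rw [← hT, mem_shf]; simpa using ht

lemma shf_compl (δ : G) (T : Finset G) : shf δ Tᶜ = (shf δ T)ᶜ := by
  ext a; simp [mem_shf]

lemma shf_inter (δ : G) (A B : Finset G) : shf δ (A ∩ B) = shf δ A ∩ shf δ B := by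
  ext a; simp [mem_shf]

lemma nsmul_inj_of_lt_ord {g : G} {i j : ℕ} (hi : i < addOrderOf g) (hj : j < addOrderOf g)
    (h : i • g = j • g) : i = j := by
  wlog hij : i ≤ j generalizing i j
  · exact (this hj hi h.symm (by omega)).symm
  have key : (j - i) • g = 0 := by
    have h2 : (j - i) • g + i • g = i • g := by
      rw [← add_nsmul]
      rw [show j - i + i = j by omega, ← h]
    have := add_right_cancel (h2.trans (zero_add (i • g)).symm)
    exact this
  have hdvd : addOrderOf g ∣ (j - i) := (addOrderOf_dvd_iff_nsmul_eq_zero).mpr key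
  have := Nat.eq_zero_of_dvd_of_lt hdvd
  rcases Nat.eq_zero_or_pos (j - i) with h0 | h0
  · omega
  · have := Nat.le_of_dvd h0 hdvd; omega

lemma card_orbit (t g : G) :
    ((range (addOrderOf g)).image (fun j => t + j • g)).card = addOrderOf g := by
  rw [Finset.card_image_of_injOn, card_range]
  intro i hi j hj hij
  simp only [coe_range, Set.mem_Iio] at hi hj
  have : i • g = j • g := by
    have := hij
    simpa using add_left_cancel this
  exact nsmul_inj_of_lt_ord hi hj this

lemma ord_dvd_card_of_shf {δ : G} (P : Finset G) (h : shf δ P = P) :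
    addOrderOf δ ∣ P.card := by
  induction P using Finset.strongInduction with
  | _ P ih => ?_
  rcases P.eq_empty_or_nonempty with rfl | ⟨t, ht⟩
  · simp
  · have hpos : 0 < addOrderOf δ := addOrderOf_pos δ
    set O := (range (addOrderOf δ)).image (fun j => t + j • δ) with hO
    have hOmem : ∀ j : ℕ, t + j • δ ∈ O := by
      intro j
      rw [hO, mem_image]
      exact ⟨j % addOrderOf δ, by simp [Nat.mod_lt _ hpos], by rw [mod_addOrderOf_nsmul]⟩
    have hPmem : ∀ j : ℕ, t + j • δ ∈ P := by
      intro j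
      induction j with
      | zero => simpa using ht
      | succ j ihj =>
        have := shf_mem h ihj
        convert this using 1
        rw [succ_nsmul]; abel
    have hOsub : O ⊆ P := by
      intro a ha
      rw [hO, mem_image] at ha
      obtain ⟨j, _, rfl⟩ := ha
      exact hPmem j
    have hshfO : shf δ O = O := by
      apply shf_eq_of_subset
      intro a ha
      rw [hO, mem_image] at ha
      obtain ⟨j, _, rfl⟩ := ha
      have : t + j • δ + δ = t + (j + 1) • δ := by rw [succ_nsmul]; abel
      rw [this]; exact hOmem _
    have hOcard : O.card = addOrderOf δ := card_orbit t δ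
    have hP' : shf δ (P \ O) = P \ O := by
      apply shf_eq_of_subset
      intro a ha
      rw [mem_sdiff] at ha ⊢
      refine ⟨shf_mem h ha.1, fun hmem => ha.2 ?_⟩
      rw [← hshfO, mem_shf] at hmem
      simpa using hmem
    have hOne : O.Nonempty := ⟨t, by simpa using hOmem 0⟩
    have hss : P \ O ⊂ P := Finset.sdiff_ssubset hOsub hOne
    have hdvd' := ih _ hss hP'
    have hcard : P.card = addOrderOf δ + (P \ O).card := by
      rw [Finset.card_sdiff_of_subset hOsub, hOcard]
      have := Finset.card_le_card hOsub
      omega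
    rw [hcard]
    exact Nat.dvd_add ⟨1, by omega⟩ hdvd'

section Fib
variable {G : Type} [AddCommGroup G] [Fintype G] [DecidableEq G]

def fib (S : Finset G) (c : G) : Finset G := univ.filter (fun y => y - c ∈ S)

lemma mem_fib {S : Finset G} {c y : G} : y ∈ fib S c ↔ y - c ∈ S := by simp [fib]

lemma self_mem_fib {S : Finset G} (hS0 : (0:G) ∈ S) {c : G} : c ∈ fib S c := by
  simp [fib, hS0]

lemma fib_eq {S : Finset G} (hadd : ∀ a ∈ S, ∀ b ∈ S, a + b ∈ S)
    (hneg : ∀ a ∈ S, -a ∈ S) {c' c : G} (h : c' - c ∈ S) : fib S c' = fib S c := by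
  ext y
  simp only [mem_fib]
  constructor
  · intro hy; have := hadd _ hy _ h; simpa [sub_add_sub_cancel] using this
  · intro hy
    have := hadd _ hy _ (hneg _ h)
    simpa [show y - c + -(c' - c) = y - c' by abel] using this

lemma fib_card {S : Finset G} {c : G} : (fib S c).card = S.card := by
  have : fib S c = S.image (· + c) := by
    ext y
    simp only [mem_fib, mem_image]
    constructor
    · intro h; exact ⟨y - c, h, by abel⟩
    · rintro ⟨b, hb, rfl⟩; simpa using hb
  rw [this, Finset.card_image_of_injective _ (add_left_injective c)]

lemma fib_disj {S : Finset G} (hadd : ∀ a ∈ S, ∀ b ∈ S, a + b ∈ S)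
    (hneg : ∀ a ∈ S, -a ∈ S) {c' c : G} (h : c' - c ∉ S) :
    Disjoint (fib S c') (fib S c) := by
  rw [Finset.disjoint_left]
  intro y hy' hy
  rw [mem_fib] at hy' hy
  have h2 := hadd _ hy' _ (hneg _ hy)
  rw [show y - c' + -(y - c) = -(c' - c) by abel] at h2
  have h3 := hneg _ h2
  rw [neg_neg] at h3
  exact h h3

end Fib

section Fib2
variable {G : Type} [AddCommGroup G] [Fintype G] [DecidableEq G]

lemma shf_fib {S : Finset G} (δ : G) (c : G) : shf δ (fib S c) = fib S (c + δ) := by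
  ext y
  simp only [mem_shf, mem_fib]
  rw [show y - δ - c = y - (c + δ) by abel]

lemma shf_S {S : Finset G} (hadd : ∀ a ∈ S, ∀ b ∈ S, a + b ∈ S) {δ : G} (hδ : δ ∈ S) :
    shf δ S = S :=
  shf_eq_of_subset (fun t ht => hadd _ ht _ hδ)

lemma ord_dvd_Scard {S : Finset G} (hadd : ∀ a ∈ S, ∀ b ∈ S, a + b ∈ S) {δ : G} (hδ : δ ∈ S) :
    addOrderOf δ ∣ S.card :=
  ord_dvd_card_of_shf S (shf_S hadd hδ)

lemma aperiodic_of_profile {S : Finset G} (hS0 : (0:G) ∈ S)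
    (hadd : ∀ a ∈ S, ∀ b ∈ S, a + b ∈ S) (hneg : ∀ a ∈ S, -a ∈ S)
    (T P : Finset G) (c0 : G) (s : ℕ)
    (hTP : T ∩ fib S c0 = P) (hPcard : P.card = s)
    (huniq : ∀ c : G, (T ∩ fib S c).card = s → c - c0 ∈ S)
    (hPper : ∀ δ ∈ S, shf δ P = P → δ = 0) :
    ∀ δ : G, shf δ T = T → δ = 0 := by
  intro δ hδ
  have hcnt : (T ∩ fib S (c0 + δ)).card = s := by
    rw [← shf_fib δ c0, ← hδ, ← shf_inter, hTP, shf_card, hPcard]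
  have hδS : δ ∈ S := by
    have := huniq _ hcnt
    simpa using this
  have hfix : shf δ P = P := by
    rw [← hTP, shf_inter, hδ, shf_fib, fib_eq hadd hneg (show c0 + δ - c0 ∈ S by simpa using hδS)]
  exact hPper δ hδS hfix

lemma exists_reps {S : Finset G} (hS0 : (0:G) ∈ S)
    (hadd : ∀ a ∈ S, ∀ b ∈ S, a + b ∈ S) (hneg : ∀ a ∈ S, -a ∈ S) :
    ∀ r : ℕ, r * S.card ≤ Fintype.card G →
    ∃ R : Finset G, R.card = r ∧ ∀ c1 ∈ R, ∀ c2 ∈ R, c1 ≠ c2 → c1 - c2 ∉ S := by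
  intro r
  induction r with
  | zero => exact fun _ => ⟨∅, by simp, by simp⟩
  | succ r ih =>
    intro hr
    have hSpos : 0 < S.card := Finset.card_pos.mpr ⟨0, hS0⟩
    obtain ⟨R, hRcard, hRsep⟩ := ih (by nlinarith)
    have hU : (R.biUnion (fib S)).card < Fintype.card G := by
      calc (R.biUnion (fib S)).card ≤ ∑ c ∈ R, (fib S c).card := Finset.card_biUnion_le
        _ = r * S.card := by simp [fib_card, hRcard, mul_comm]
        _ < (r+1) * S.card := by nlinarith
        _ ≤ Fintype.card G := hr
    obtain ⟨c, hc⟩ : ∃ c, c ∉ R.biUnion (fib S) := by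
      by_contra h
      push_neg at h
      have : (univ : Finset G) ⊆ R.biUnion (fib S) := fun y _ => h y
      have := Finset.card_le_card this
      simp only [Finset.card_univ] at this
      omega
    have hcR : c ∉ R := fun hmem =>
      hc (Finset.mem_biUnion.mpr ⟨c, hmem, self_mem_fib hS0⟩)
    refine ⟨insert c R, by rw [Finset.card_insert_of_notMem hcR, hRcard], ?_⟩
    intro c1 h1 c2 h2 hne
    rw [Finset.mem_insert] at h1 h2
    have key : ∀ d ∈ R, c - d ∉ S := fun d hd hmem =>
      hc (Finset.mem_biUnion.mpr ⟨d, hd, mem_fib.mpr hmem⟩)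
    rcases h1 with rfl | h1 <;> rcases h2 with rfl | h2
    · exact absurd rfl hne
    · exact key c2 h2
    · intro hmem
      exact key c1 h1 (by simpa [neg_sub] using hneg _ hmem)
    · exact hRsep c1 h1 c2 h2 hne

end Fib2
section Constr
variable {G : Type} [AddCommGroup G] [Fintype G] [DecidableEq G]

lemma exists_aperiodic_subset {S : Finset G} (hS0 : (0:G) ∈ S)
    (hadd : ∀ a ∈ S, ∀ b ∈ S, a + b ∈ S) (hneg : ∀ a ∈ S, -a ∈ S)
    (a j s : ℕ) (hs0 : 0 < s) (hsm : s < S.card) (hs1 : s = 1 → j = 0)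
    (hbudget : (a + 1 + j) * S.card ≤ Fintype.card G)
    (hpiece : ∀ c : G, ∃ P : Finset G, P ⊆ fib S c ∧ P.card = s ∧
        ∀ δ ∈ S, shf δ P = P → δ = 0) :
    ∃ T : Finset G, T.card = a * S.card + s + j ∧ ∀ δ : G, shf δ T = T → δ = 0 := by
  obtain ⟨R, hRcard, hRsep⟩ := exists_reps hS0 hadd hneg (a + 1 + j) hbudget
  -- pick c0, A, J
  obtain ⟨c0, hc0R⟩ : R.Nonempty := Finset.card_pos.mp (by omega)
  set R' := R.erase c0 with hR'
  have hR'card : R'.card = a + j := by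
    rw [hR', Finset.card_erase_of_mem hc0R, hRcard]; omega
  obtain ⟨A, hAsub, hAcard⟩ := Finset.exists_subset_card_eq (show a ≤ R'.card by omega)
  set J := R' \ A with hJ
  have hJcard : J.card = j := by
    rw [hJ, Finset.card_sdiff_of_subset hAsub, hR'card, hAcard]; omega
  have hJsub : J ⊆ R' := Finset.sdiff_subset
  have hAR : A ⊆ R := hAsub.trans (Finset.erase_subset _ _)
  have hJR : J ⊆ R := hJsub.trans (Finset.erase_subset _ _)
  have hc0A : c0 ∉ A := fun h => (Finset.mem_erase.mp (hAsub h)).1 rfl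
  have hc0J : c0 ∉ J := fun h => (Finset.mem_erase.mp (hJsub h)).1 rfl
  have hAJ : Disjoint A J := Finset.disjoint_sdiff
  obtain ⟨P, hPsub, hPcard, hPper⟩ := hpiece c0
  set T := A.biUnion (fib S) ∪ (P ∪ J) with hT
  -- separation facts
  have sep : ∀ c1 ∈ R, ∀ c2 ∈ R, c1 ≠ c2 → Disjoint (fib S c1) (fib S c2) :=
    fun c1 h1 c2 h2 hne => fib_disj hadd hneg (hRsep c1 h1 c2 h2 hne)
  have hJfib : ∀ c2 ∈ J, c2 ∈ fib S c2 := fun c2 _ => self_mem_fib hS0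
  -- membership of parts in fibers
  have hAmem : ∀ y ∈ A.biUnion (fib S), ∃ c1 ∈ A, y ∈ fib S c1 := by
    intro y hy; exact Finset.mem_biUnion.mp hy
  -- Disjointness for card computation
  have hdisj1 : Disjoint (A.biUnion (fib S)) (P ∪ J) := by
    rw [Finset.disjoint_left]
    intro y hy hy2
    obtain ⟨c1, hc1, hyc1⟩ := hAmem y hy
    have hne : c1 ≠ c0 := fun h => hc0A (h ▸ hc1)
    rcases Finset.mem_union.mp hy2 with hyP | hyJ
    · exact (Finset.disjoint_left.mp (sep c1 (hAR hc1) c0 hc0R hne)) hyc1 (hPsub hyP)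
    · have hne2 : c1 ≠ y := fun h => (Finset.disjoint_left.mp hAJ) (h ▸ hc1) hyJ
      exact (Finset.disjoint_left.mp (sep c1 (hAR hc1) y (hJR hyJ) hne2)) hyc1
        (self_mem_fib hS0)
  have hdisj2 : Disjoint P J := by
    rw [Finset.disjoint_left]
    intro y hyP hyJ
    have hne : c0 ≠ y := fun h => hc0J (h ▸ hyJ)
    exact (Finset.disjoint_left.mp (sep c0 hc0R y (hJR hyJ) hne)) (hPsub hyP)
      (self_mem_fib hS0)
  have hAdisj : ∀ c1 ∈ A, ∀ c2 ∈ A, c1 ≠ c2 → Disjoint (fib S c1) (fib S c2) :=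
    fun c1 h1 c2 h2 hne => sep c1 (hAR h1) c2 (hAR h2) hne
  have hTcard : T.card = a * S.card + s + j := by
    rw [hT, Finset.card_union_of_disjoint hdisj1, Finset.card_union_of_disjoint hdisj2,
      Finset.card_biUnion hAdisj]
    have : ∑ c1 ∈ A, (fib S c1).card = a * S.card := by
      rw [Finset.sum_congr rfl (fun c1 _ => fib_card), Finset.sum_const, hAcard, smul_eq_mul]
    rw [this, hPcard, hJcard]; ring
  -- T ∩ fib c0 = P
  have hTP : T ∩ fib S c0 = P := by
    apply Finset.Subset.antisymm
    · intro y hy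
      rw [Finset.mem_inter] at hy
      obtain ⟨hyT, hyF⟩ := hy
      rw [hT, Finset.mem_union, Finset.mem_union] at hyT
      rcases hyT with hyA | hyP | hyJ
      · obtain ⟨c1, hc1, hyc1⟩ := hAmem y hyA
        have hne : c1 ≠ c0 := fun h => hc0A (h ▸ hc1)
        exact absurd hyF (Finset.disjoint_left.mp (sep c1 (hAR hc1) c0 hc0R hne) hyc1)
      · exact hyP
      · have hne : y ≠ c0 := fun h => hc0J (h ▸ hyJ)
        exact absurd hyF (Finset.disjoint_left.mp (sep y (hJR hyJ) c0 hc0R hne)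
          (self_mem_fib hS0))
    · intro y hy
      rw [Finset.mem_inter]
      exact ⟨by rw [hT]; simp [hy], hPsub hy⟩
  -- uniqueness of the count s
  have huniq : ∀ c : G, (T ∩ fib S c).card = s → c - c0 ∈ S := by
    intro c hcnt
    by_cases h0 : c - c0 ∈ S
    · exact h0
    by_cases hA : ∃ c1 ∈ A, c - c1 ∈ S
    · obtain ⟨c1, hc1, hcc1⟩ := hA
      have : fib S c = fib S c1 := fib_eq hadd hneg hcc1
      have hsub : fib S c1 ⊆ T := by
        intro y hy
        rw [hT]
        exact Finset.mem_union.mpr (Or.inl (Finset.mem_biUnion.mpr ⟨c1, hc1, hy⟩))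
      have : fib S c ⊆ T ∩ fib S c := by
        intro y hy
        rw [Finset.mem_inter]
        exact ⟨hsub (this ▸ hy), hy⟩
      have hge := Finset.card_le_card this
      rw [fib_card, hcnt] at hge
      omega
    · -- T ∩ fib c ⊆ J ∩ fib c, which has at most one element
      push_neg at hA
      have hsub : T ∩ fib S c ⊆ J ∩ fib S c := by
        intro y hy
        rw [Finset.mem_inter] at hy
        obtain ⟨hyT, hyF⟩ := hy
        rw [hT, Finset.mem_union, Finset.mem_union] at hyT
        rcases hyT with hyA | hyP | hyJ
        · obtain ⟨c1, hc1, hyc1⟩ := hAmem y hyA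
          have hdis : Disjoint (fib S c1) (fib S c) := by
            apply fib_disj hadd hneg
            intro hmem
            exact hA c1 hc1 (by simpa [neg_sub] using hneg _ hmem)
          exact absurd hyF (Finset.disjoint_left.mp hdis hyc1)
        · have hdis : Disjoint (fib S c0) (fib S c) := by
            apply fib_disj hadd hneg
            intro hmem
            exact h0 (by simpa [neg_sub] using hneg _ hmem)
          exact absurd hyF (Finset.disjoint_left.mp hdis (hPsub hyP))
        · exact Finset.mem_inter.mpr ⟨hyJ, hyF⟩
      have hcard1 : (J ∩ fib S c).card ≤ 1 := by
        rw [Finset.card_le_one]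
        intro y1 hy1 y2 hy2
        rw [Finset.mem_inter] at hy1 hy2
        by_contra hne
        have hdis := sep y1 (hJR hy1.1) y2 (hJR hy2.1) hne
        -- y1, y2 both in fib S c; but fib y1 = fib c ∋ y2... derive contradiction:
        have e1 : fib S y1 = fib S c := fib_eq hadd hneg (mem_fib.mp hy1.2)
        have e2 : fib S y2 = fib S c := fib_eq hadd hneg (mem_fib.mp hy2.2)
        rw [e1, e2] at hdis
        have : c ∈ fib S c := self_mem_fib hS0
        exact (Finset.disjoint_left.mp hdis) this this
      have := Finset.card_le_card hsub
      rw [hcnt] at this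
      have hs1' : s = 1 := by omega
      have hJempty : J = ∅ := Finset.card_eq_zero.mp (by rw [hJcard]; exact hs1 hs1')
      rw [hJempty] at hsub
      have : (T ∩ fib S c).card = 0 := by
        have := Finset.card_le_card hsub
        simpa using this
      omega
  exact ⟨T, hTcard, aperiodic_of_profile hS0 hadd hneg T P c0 s hTP hPcard huniq hPper⟩

end Constr
section Cyc
variable {G : Type} [AddCommGroup G] [Fintype G] [DecidableEq G]

noncomputable def cycF (g : G) : Finset G := (range (addOrderOf g)).image (· • g)

lemma mem_cycF {g : G} (j : ℕ) : j • g ∈ cycF g := by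
  have hpos : 0 < addOrderOf g := addOrderOf_pos g
  rw [cycF, mem_image]
  exact ⟨j % addOrderOf g, by simp [Nat.mod_lt _ hpos], by rw [mod_addOrderOf_nsmul]⟩

lemma mem_cycF_iff {g x : G} : x ∈ cycF g ↔ ∃ j < addOrderOf g, j • g = x := by
  rw [cycF, mem_image]
  simp

lemma cycF_zero_mem {g : G} : (0:G) ∈ cycF g := by
  have := mem_cycF (g := g) 0
  simpa using this

lemma cycF_add {g : G} : ∀ a ∈ cycF g, ∀ b ∈ cycF g, a + b ∈ cycF g := by
  intro a ha b hb
  obtain ⟨i, _, rfl⟩ := mem_cycF_iff.mp ha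
  obtain ⟨j, _, rfl⟩ := mem_cycF_iff.mp hb
  rw [← add_nsmul]
  exact mem_cycF _

lemma cycF_neg {g : G} : ∀ a ∈ cycF g, -a ∈ cycF g := by
  intro a ha
  obtain ⟨j, hj, rfl⟩ := mem_cycF_iff.mp ha
  have hzero : (addOrderOf g * j) • g = 0 :=
    addOrderOf_dvd_iff_nsmul_eq_zero.mp (dvd_mul_right _ _)
  have hsum : (addOrderOf g * j - j) • g + j • g = 0 := by
    rw [← add_nsmul, show addOrderOf g * j - j + j = addOrderOf g * j by
      have : j ≤ addOrderOf g * j := Nat.le_mul_of_pos_left j (addOrderOf_pos g)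
      omega]
    exact hzero
  have : -(j • g) = (addOrderOf g * j - j) • g := neg_eq_of_add_eq_zero_left hsum
  rw [this]
  exact mem_cycF _

lemma cycF_card {g : G} : (cycF g).card = addOrderOf g := by
  rw [cycF, Finset.card_image_of_injOn, card_range]
  intro i hi j hj hij
  simp only [coe_range, Set.mem_Iio] at hi hj
  exact nsmul_inj_of_lt_ord hi hj hij

lemma cycF_g_mem {g : G} : g ∈ cycF g := by
  have := mem_cycF (g := g) 1
  simpa using this

end Cyc
section Pieces
variable {G : Type} [AddCommGroup G] [Fintype G] [DecidableEq G]

lemma generic_piece {S : Finset G} (hadd : ∀ a ∈ S, ∀ b ∈ S, a + b ∈ S)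
    (s : ℕ) (hs : s ≤ S.card) (hgcd : Nat.gcd s S.card = 1) :
    ∀ c : G, ∃ P ⊆ fib S c, P.card = s ∧ ∀ δ ∈ S, shf δ P = P → δ = 0 := by
  intro c
  obtain ⟨P, hPsub, hPcard⟩ :=
    Finset.exists_subset_card_eq (show s ≤ (fib S c).card by rw [fib_card]; exact hs)
  refine ⟨P, hPsub, hPcard, fun δ hδ hfix => ?_⟩
  have h1 : addOrderOf δ ∣ s := hPcard ▸ ord_dvd_card_of_shf P hfix
  have h2 : addOrderOf δ ∣ S.card := ord_dvd_Scard hadd hδ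
  have h3 : addOrderOf δ ∣ 1 := hgcd ▸ Nat.dvd_gcd h1 h2
  exact AddMonoid.addOrderOf_eq_one_iff.mp (Nat.dvd_one.mp h3)

lemma piece_two {g : G} (hg : addOrderOf g = 4) :
    ∀ c : G, ∃ P ⊆ fib (cycF g) c, P.card = 2 ∧ ∀ δ ∈ cycF g, shf δ P = P → δ = 0 := by
  intro c
  have hgne : g ≠ 0 := by
    intro h
    rw [h, addOrderOf_zero] at hg
    omega
  have h2gne : (2:ℕ) • g ≠ 0 := by
    intro h
    have := addOrderOf_dvd_iff_nsmul_eq_zero.mpr h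
    rw [hg] at this
    omega
  have hcne : c ≠ c + g := by
    intro h
    apply hgne
    have := h.symm
    rwa [add_eq_left] at this
  refine ⟨{c, c + g}, ?_, ?_, ?_⟩
  · intro y hy
    rcases Finset.mem_insert.mp hy with rfl | hy
    · exact self_mem_fib cycF_zero_mem
    · rw [Finset.mem_singleton] at hy
      subst hy
      rw [mem_fib]
      simpa using cycF_g_mem
  · rw [Finset.card_insert_of_notMem (by simpa using hcne), Finset.card_singleton]
  · intro δ hδ hfix
    have hcard : ({c, c+g} : Finset G).card = 2 := by
      rw [Finset.card_insert_of_notMem (by simpa using hcne), Finset.card_singleton]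
    have h1 : addOrderOf δ ∣ 2 := hcard ▸ ord_dvd_card_of_shf _ hfix
    have h2δ : 2 • δ = 0 := addOrderOf_dvd_iff_nsmul_eq_zero.mp h1
    obtain ⟨j, hj4, rfl⟩ := mem_cycF_iff.mp hδ
    rw [hg] at hj4
    have h2j : (2 * j) • g = 0 := by
      rw [mul_comm 2 j, mul_nsmul]
      exact h2δ
    have hdvd : 4 ∣ 2 * j := by
      have := addOrderOf_dvd_iff_nsmul_eq_zero.mpr h2j
      rwa [hg] at this
    have hj02 : j = 0 ∨ j = 2 := by omega
    rcases hj02 with rfl | rfl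
    · simp
    · exfalso
      have hc1 : c ∈ ({c, c+g} : Finset G) := by simp
      have := shf_mem hfix hc1
      rcases Finset.mem_insert.mp this with h | h
      · apply h2gne
        have := h.symm
        rwa [left_eq_add] at this
      · rw [Finset.mem_singleton] at h
        have h2g : (2:ℕ) • g = g := add_left_cancel h
        apply hgne
        rw [two_nsmul] at h2g
        exact add_eq_left.mp h2g

end Pieces
section Klein
variable {G : Type} [AddCommGroup G] [Fintype G] [DecidableEq G]

lemma klein (h2 : ∀ x : G, x + x = 0) {u v : G} (hu : u ≠ 0) (hv : v ≠ 0) (huv : u ≠ v) :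
    ∃ S : Finset G, S.card = 4 ∧ (0:G) ∈ S ∧ (∀ a ∈ S, ∀ b ∈ S, a + b ∈ S) ∧
      (∀ a ∈ S, -a ∈ S) := by
  have hneg : ∀ x : G, -x = x := fun x => neg_eq_of_add_eq_zero_left (h2 x)
  have huv0 : u + v ≠ 0 := by
    intro h
    apply huv
    have h3 : u = -v := eq_neg_of_add_eq_zero_left h
    rwa [hneg] at h3
  have huvu : u + v ≠ u := by
    intro h; exact hv (add_eq_right.mp (by rwa [add_comm u v] at h))
  have huvv : u + v ≠ v := by
    intro h; exact hu (add_eq_right.mp h)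
  refine ⟨{0, u, v, u + v}, ?_, by simp, ?_, ?_⟩
  · rw [Finset.card_insert_of_notMem (by simp [eq_comm, hu, hv, huv0]),
      Finset.card_insert_of_notMem (by simp [huv, left_eq_add, hv]),
      Finset.card_insert_of_notMem (by simp [right_eq_add, hu]),
      Finset.card_singleton]
  · intro a ha b hb
    simp only [Finset.mem_insert, Finset.mem_singleton] at ha hb ⊢
    have key : ∀ x y : G, x + (x + y) = y := fun x y => by rw [← add_assoc, h2, zero_add]
    have key2 : ∀ x y : G, y + (x + y) = x := fun x y => by
      rw [add_comm x y, ← add_assoc, h2, zero_add]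
    rcases ha with rfl|rfl|rfl|rfl <;> rcases hb with rfl|rfl|rfl|rfl <;>
      simp [h2, key, key2, add_comm]
  · intro a ha
    rwa [hneg]

end Klein
section Master2
variable {G : Type} [AddCommGroup G] [Fintype G] [DecidableEq G]

lemma exists_order_four (L : ℕ) (hcard : Fintype.card G = 2 ^ L)
    (g0 : G) (hg0 : g0 + g0 ≠ 0) : ∃ g : G, addOrderOf g = 4 := by
  set t := addOrderOf g0 with ht
  have htpos : 0 < t := addOrderOf_pos g0
  have htdvd : t ∣ 2 ^ L := by rw [← hcard]; exact addOrderOf_dvd_card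
  obtain ⟨i, hiL, hti⟩ := (Nat.dvd_prime_pow Nat.prime_two).mp htdvd
  have ht1 : t ≠ 1 := by
    intro h
    have h0 : g0 = 0 := AddMonoid.addOrderOf_eq_one_iff.mp h
    rw [h0] at hg0
    simp at hg0
  have ht2 : t ≠ 2 := by
    intro h
    apply hg0
    have hz : t • g0 = 0 := addOrderOf_nsmul_eq_zero g0
    rw [h, two_nsmul] at hz
    exact hz
  have hi2 : 2 ≤ i := by
    by_contra h
    push_neg at h
    interval_cases i <;> simp_all
  have h4t : (4:ℕ) ∣ t := by
    rw [hti]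
    calc (4:ℕ) = 2 ^ 2 := by norm_num
      _ ∣ 2 ^ i := pow_dvd_pow 2 hi2
  refine ⟨(t / 4) • g0, ?_⟩
  have ht4 : t / 4 * 4 = t := Nat.div_mul_cancel h4t
  have h4z : (4:ℕ) • ((t / 4) • g0) = 0 := by
    rw [← mul_nsmul]
    rw [ht4]
    exact addOrderOf_nsmul_eq_zero g0
  have hdvd4 : addOrderOf ((t / 4) • g0) ∣ 4 := addOrderOf_dvd_iff_nsmul_eq_zero.mpr h4z
  have h2nz : (2:ℕ) • ((t / 4) • g0) ≠ 0 := by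
    rw [← mul_nsmul]
    intro h
    have := addOrderOf_dvd_iff_nsmul_eq_zero.mpr h
    rw [← ht] at this
    have hle := Nat.le_of_dvd (by omega) this
    omega
  have hordpos : 0 < addOrderOf ((t / 4) • g0) := addOrderOf_pos _
  obtain ⟨c, hc⟩ := hdvd4
  have hc4 : c ≤ 4 := by nlinarith
  have hcases : addOrderOf ((t / 4) • g0) = 1 ∨ addOrderOf ((t / 4) • g0) = 2 ∨
      addOrderOf ((t / 4) • g0) = 4 := by
    interval_cases c <;> omega
  rcases hcases with h | h | h
  · exfalso
    apply h2nz
    have h0 : (t / 4) • g0 = 0 := AddMonoid.addOrderOf_eq_one_iff.mp h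
    rw [h0]; simp
  · exfalso
    apply h2nz
    have := addOrderOf_nsmul_eq_zero ((t / 4) • g0)
    rwa [h] at this
  · exact h

end Master2
section Master
variable {G : Type} [AddCommGroup G] [Fintype G] [DecidableEq G]

theorem exists_aperiodic_half (k : ℕ) (hk1 : 1 ≤ k) (hk2 : 2 * k ≤ Fintype.card G)
    (hexc : ¬ (k = 2 ∧ ∀ x : G, x + x = 0)) :
    ∃ T : Finset G, T.card = k ∧ ∀ δ : G, shf δ T = T → δ = 0 := by
  set n := Fintype.card G with hn
  have hn2 : 2 ≤ n := by omega
  by_cases hc1 : ∃ p : ℕ, p.Prime ∧ p ∣ n ∧ ¬ p ∣ k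
  · -- Case (i): some prime of n does not divide k
    obtain ⟨p, hp, hpn, hpk⟩ := hc1
    haveI : Fact p.Prime := ⟨hp⟩
    obtain ⟨g, hg⟩ := exists_prime_addOrderOf_dvd_card p hpn
    have hScard : (cycF g).card = p := by rw [cycF_card, hg]
    have hppos : 0 < p := hp.pos
    have hs0 : 0 < k % p := Nat.pos_of_ne_zero (fun h => hpk (Nat.dvd_of_mod_eq_zero h))
    have hsm : k % p < p := Nat.mod_lt _ hppos
    have hgcd : Nat.gcd (k % p) p = 1 := by
      have hnd : ¬ p ∣ k % p := fun h => by
        have := Nat.le_of_dvd hs0 h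
        omega
      exact Nat.Coprime.symm ((Nat.Prime.coprime_iff_not_dvd hp).mpr hnd)
    have hbudget : (k / p + 1 + 0) * p ≤ n := by
      rcases eq_or_ne p n with hpe | hpne
      · have hkp : k / p = 0 := Nat.div_eq_of_lt (by omega)
        rw [hkp]
        omega
      · have h2p : 2 * p ≤ n := by
          obtain ⟨c, hc⟩ := hpn
          have hc1' : c ≠ 1 := by rintro rfl; rw [mul_one] at hc; exact hpne hc.symm
          have hc0' : c ≠ 0 := by rintro rfl; omega
          have hc2' : 2 ≤ c := by omega
          calc 2 * p ≤ c * p := Nat.mul_le_mul_right p hc2'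
            _ = n := by rw [hc, mul_comm]
        have h1 : k / p * p ≤ k := Nat.div_mul_le_self k p
        have h2 : (k / p + 1 + 0) * p = k / p * p + p := by ring
        rw [h2]
        set m := k / p * p with hm
        omega
    obtain ⟨T, hT1, hT2⟩ := exists_aperiodic_subset cycF_zero_mem cycF_add cycF_neg
      (k / p) 0 (k % p) hs0 (by rw [hScard]; exact hsm) (fun _ => rfl)
      (by rw [hScard]; exact hbudget)
      (generic_piece cycF_add (k % p) (by rw [hScard]; omega) (by rw [hScard]; exact hgcd))
    refine ⟨T, ?_, hT2⟩
    rw [hT1, hScard]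
    have hdm := Nat.div_add_mod k p
    rw [mul_comm] at hdm
    omega
  · push_neg at hc1
    by_cases hc2 : ∃ p : ℕ, p.Prime ∧ p ∣ n ∧ p ∣ k ∧ Odd p
    · -- Case (ii): an odd prime divides both n and k
      obtain ⟨p, hp, hpn, hpk, hpodd⟩ := hc2
      haveI : Fact p.Prime := ⟨hp⟩
      obtain ⟨g, hg⟩ := exists_prime_addOrderOf_dvd_card p hpn
      have hScard : (cycF g).card = p := by rw [cycF_card, hg]
      have hp3 : 3 ≤ p := by
        rcases hpodd with ⟨m, hm⟩
        have := hp.two_le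
        omega
      have hpk' : p ≤ k := Nat.le_of_dvd (by omega) hpk
      have hgcd : Nat.gcd (p - 1) p = 1 := by
        have hnd : ¬ p ∣ (p - 1) := fun h => by
          have := Nat.le_of_dvd (by omega) h
          omega
        exact Nat.Coprime.symm ((Nat.Prime.coprime_iff_not_dvd hp).mpr hnd)
      have hbudget : ((k / p - 1) + 1 + 1) * p ≤ n := by
        have hdm : k / p * p = k := Nat.div_mul_cancel hpk
        have hdp : 1 ≤ k / p := by
          rcases Nat.eq_zero_or_pos (k / p) with h | h
          · rw [h] at hdm; omega
          · omega
        have : ((k / p - 1) + 1 + 1) * p = k + p := by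
          rw [show (k / p - 1) + 1 + 1 = k / p + 1 by omega, add_mul, one_mul, hdm]
        omega
      obtain ⟨T, hT1, hT2⟩ := exists_aperiodic_subset cycF_zero_mem cycF_add cycF_neg
        (k / p - 1) 1 (p - 1) (by omega) (by rw [hScard]; omega)
        (fun h => by omega) (by rw [hScard]; exact hbudget)
        (generic_piece cycF_add (p - 1) (by rw [hScard]; omega) (by rw [hScard]; exact hgcd))
      refine ⟨T, ?_, hT2⟩
      rw [hT1, hScard]
      have hdm : k / p * p = k := Nat.div_mul_cancel hpk
      have hdp : 1 ≤ k / p := by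
        rcases Nat.eq_zero_or_pos (k / p) with h | h
        · rw [h] at hdm; omega
        · omega
      have : (k / p - 1) * p = k - p := by
        rw [Nat.sub_mul, hdm, one_mul]
      omega
    · -- Case (iii): n is a power of two and k is even
      push_neg at hc2
      have hno_odd : ∀ q : ℕ, q.Prime → q ∣ n → q = 2 := by
        intro q hq hqn
        have hqk := hc1 q hq hqn
        have := hc2 q hq hqn hqk
        rcases hq.eq_two_or_odd' with h | h
        · exact h
        · exact absurd h this
      have h2k : 2 ∣ k := by
        obtain ⟨p, hp, hpn⟩ := Nat.exists_prime_and_dvd (show n ≠ 1 by omega)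
        have := hno_odd p hp hpn
        subst this
        exact hc1 2 hp hpn
      have hk2' : 2 ≤ k := by omega
      have hn4 : 4 ≤ n := by omega
      have hpow : n = 2 ^ n.primeFactorsList.length :=
        Nat.eq_prime_pow_of_unique_prime_dvd (by omega) (fun hd hdn => hno_odd _ hd hdn)
      have hdm4 := Nat.div_add_mod k 4
      rw [mul_comm] at hdm4
      by_cases htor : ∀ x : G, x + x = 0
      · -- elementary abelian 2-group
        have hkne2 : k ≠ 2 := fun h => hexc ⟨h, htor⟩
        haveI : Nontrivial G := Fintype.one_lt_card_iff_nontrivial.mp (by omega)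
        obtain ⟨u, hu⟩ := exists_ne (0 : G)
        obtain ⟨v, hv⟩ : ∃ v : G, v ∉ ({0, u} : Finset G) := by
          by_contra h
          push_neg at h
          have hsub : (univ : Finset G) ⊆ ({0, u} : Finset G) := fun y _ => h y
          have := Finset.card_le_card hsub
          have h2 : ({0, u} : Finset G).card ≤ 2 := Finset.card_insert_le _ _ |>.trans (by simp)
          rw [Finset.card_univ] at this
          omega
        simp only [Finset.mem_insert, Finset.mem_singleton] at hv
        push_neg at hv
        obtain ⟨S, hScard, hS0, hSadd, hSneg⟩ := klein htor hu hv.1 (fun h => hv.2 h.symm)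
        by_cases hk4 : k % 4 = 0
        · -- s = 3, j = 1, a = k/4 - 1
          have hk4' : 4 ≤ k := by omega
          obtain ⟨T, hT1, hT2⟩ := exists_aperiodic_subset hS0 hSadd hSneg
            (k / 4 - 1) 1 3 (by omega) (by omega) (by omega)
            (by rw [hScard]; omega)
            (generic_piece hSadd 3 (by omega) (by rw [hScard]; decide))
          refine ⟨T, ?_, hT2⟩
          rw [hT1, hScard]
          omega
        · -- k % 4 = 2 : s = 3, j = 3, a = (k-6)/4
          have hk42 : k % 4 = 2 := by omega
          have hk6 : 6 ≤ k := by omega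
          have hn16 : k + 10 ≤ n := by
            rcases Nat.lt_or_ge k 10 with hk10 | hk10
            · -- k = 6, need n ≥ 16
              have hk6' : k = 6 := by omega
              set L := n.primeFactorsList.length with hL
              have hnL : n = 2 ^ L := hpow
              have hL4 : 4 ≤ L := by
                by_contra hcon
                push_neg at hcon
                have : (2:ℕ) ^ L ≤ 2 ^ 3 := Nat.pow_le_pow_right (by omega) (by omega)
                omega
              have : (2:ℕ) ^ 4 ≤ 2 ^ L := Nat.pow_le_pow_right (by omega) hL4
              omega
            · omega
          have hdm6 := Nat.div_add_mod (k - 6) 4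
          rw [mul_comm] at hdm6
          obtain ⟨T, hT1, hT2⟩ := exists_aperiodic_subset hS0 hSadd hSneg
            ((k - 6) / 4) 3 3 (by omega) (by omega) (by omega)
            (by rw [hScard]; omega)
            (generic_piece hSadd 3 (by omega) (by rw [hScard]; decide))
          refine ⟨T, ?_, hT2⟩
          rw [hT1, hScard]
          omega
      · -- there is an element of order 4
        push_neg at htor
        obtain ⟨g0, hg0⟩ := htor
        obtain ⟨g, hg4⟩ := exists_order_four n.primeFactorsList.length hpow g0 hg0
        have hScard : (cycF g).card = 4 := by rw [cycF_card, hg4]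
        by_cases hk4 : k % 4 = 0
        · have hk4' : 4 ≤ k := by omega
          obtain ⟨T, hT1, hT2⟩ := exists_aperiodic_subset (S := cycF g)
            cycF_zero_mem cycF_add cycF_neg
            (k / 4 - 1) 1 3 (by omega) (by omega) (by omega)
            (by rw [hScard]; omega)
            (generic_piece cycF_add 3 (by omega) (by rw [hScard]; decide))
          refine ⟨T, ?_, hT2⟩
          rw [hT1, hScard]
          omega
        · have hk42 : k % 4 = 2 := by omega
          have hdm2 := Nat.div_add_mod (k - 2) 4
          rw [mul_comm] at hdm2
          obtain ⟨T, hT1, hT2⟩ := exists_aperiodic_subset (S := cycF g)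
            cycF_zero_mem cycF_add cycF_neg
            ((k - 2) / 4) 0 2 (by omega) (by omega) (by omega)
            (by rw [hScard]; omega)
            (piece_two hg4)
          refine ⟨T, ?_, hT2⟩
          rw [hT1, hScard]
          omega

end Master
section Swap
variable {G : Type} [AddCommGroup G] [Fintype G] [DecidableEq G]

lemma swap_lemma {k : ℕ} {x : G} (h : sumBlocks G k x = ∅) {T : Finset G} (hT : T.card = k) :
    shf (x - T.sum id) T = T := by
  have hne : ∀ T' : Finset G, T'.card = k → T'.sum id ≠ x := by
    intro T' h1 h2
    have hmem : T' ∈ sumBlocks G k x := by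
      rw [sumBlocks, Finset.mem_filter]
      exact ⟨Finset.mem_univ _, h1, h2⟩
    rw [h] at hmem
    exact absurd hmem (Finset.notMem_empty _)
  apply shf_eq_of_subset
  intro t ht
  by_contra hmem
  set δ := x - T.sum id with hδ
  have hk1 : 1 ≤ k := by
    rw [← hT]; exact Finset.card_pos.mpr ⟨t, ht⟩
  set T' := insert (t + δ) (T.erase t) with hT'
  have hni : t + δ ∉ T.erase t := fun hc => hmem (Finset.mem_of_mem_erase hc)
  have hcard : T'.card = k := by
    rw [hT', Finset.card_insert_of_notMem hni, Finset.card_erase_of_mem ht, hT]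
    omega
  apply hne T' hcard
  rw [hT', Finset.sum_insert hni, Finset.sum_erase_eq_sub ht]
  simp only [id_eq, hδ]
  abel

lemma shf_univ (δ : G) : shf δ (univ : Finset G) = univ :=
  shf_eq_of_subset (fun t _ => Finset.mem_univ _)

lemma sum_zero_of_two_shifts (h2 : ∀ x : G, x + x = 0) {u v : G} (hu : u ≠ 0) (hv : v ≠ 0)
    (huv : u ≠ v) : ∀ W : Finset G, shf u W = W → shf v W = W → W.sum id = 0 := by
  have hneg : ∀ x : G, -x = x := fun x => neg_eq_of_add_eq_zero_left (h2 x)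
  have huv0 : u + v ≠ 0 := by
    intro h
    apply huv
    have h3 : u = -v := eq_neg_of_add_eq_zero_left h
    rwa [hneg] at h3
  intro W
  induction W using Finset.strongInduction with
  | _ W ih => ?_
  intro hWu hWv
  rcases W.eq_empty_or_nonempty with rfl | ⟨t, ht⟩
  · simp
  set O : Finset G := {t, t + u, t + v, t + u + v} with hO
  have hOsub : O ⊆ W := by
    intro y hy
    rw [hO] at hy
    simp only [Finset.mem_insert, Finset.mem_singleton] at hy
    rcases hy with rfl | rfl | rfl | rfl
    · exact ht
    · exact shf_mem hWu ht
    · exact shf_mem hWv ht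
    · exact shf_mem hWv (shf_mem hWu ht)
  have hmemO : ∀ y : G, y ∈ O ↔ (y = t ∨ y = t + u ∨ y = t + v ∨ y = t + u + v) := by
    intro y
    rw [hO]
    simp only [Finset.mem_insert, Finset.mem_singleton]
  have hOu : shf u O = O := by
    apply shf_eq_of_subset
    intro a ha
    rw [hmemO] at ha
    rw [hmemO]
    rcases ha with rfl | rfl | rfl | rfl
    · right; left; rfl
    · left; rw [add_assoc, h2, add_zero]
    · right; right; right; abel
    · right; right; left
      have he : t + u + v + u = t + v + (u + u) := by abel
      rw [he, h2, add_zero]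
  have hOv : shf v O = O := by
    apply shf_eq_of_subset
    intro a ha
    rw [hmemO] at ha
    rw [hmemO]
    rcases ha with rfl | rfl | rfl | rfl
    · right; right; left; rfl
    · right; right; right; rfl
    · left; rw [add_assoc, h2, add_zero]
    · right; left
      have he : t + u + v + v = t + u + (v + v) := by abel
      rw [he, h2, add_zero]
  have hd_t_u : t ≠ t + u := fun hc => hu (left_eq_add.mp hc)
  have hd_t_v : t ≠ t + v := fun hc => hv (left_eq_add.mp hc)
  have hd_t_uv : t ≠ t + u + v := fun hc => by
    have hc' : t = t + (u + v) := by rw [← add_assoc]; exact hc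
    exact huv0 (left_eq_add.mp hc')
  have hd_uv : t + u ≠ t + v := fun hc => huv (add_left_cancel hc)
  have hd_u_uv : t + u ≠ t + u + v := fun hc => hv (left_eq_add.mp hc)
  have hd_v_uv : t + v ≠ t + u + v := fun hc => by
    apply hu
    have hc' : t + v = t + v + u := by nth_rewrite 1 [hc]; abel
    exact left_eq_add.mp hc'
  have hn1 : t ∉ ({t + u, t + v, t + u + v} : Finset G) := by
    simp only [Finset.mem_insert, Finset.mem_singleton]
    push_neg
    exact ⟨hd_t_u, hd_t_v, hd_t_uv⟩
  have hn2 : t + u ∉ ({t + v, t + u + v} : Finset G) := by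
    simp only [Finset.mem_insert, Finset.mem_singleton]
    push_neg
    exact ⟨hd_uv, hd_u_uv⟩
  have hn3 : t + v ∉ ({t + u + v} : Finset G) := by
    simp only [Finset.mem_singleton]
    exact hd_v_uv
  have hOsum : O.sum id = 0 := by
    rw [hO, Finset.sum_insert hn1, Finset.sum_insert hn2, Finset.sum_insert hn3,
      Finset.sum_singleton]
    simp only [id_eq]
    have hcalc : t + (t + u + (t + v + (t + u + v))) = t + t + (t + t) + (u + u) + (v + v) := by
      abel
    rw [hcalc, h2 t, h2 u, h2 v]
    simp
  have hWO_u : shf u (W \ O) = W \ O := by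
    apply shf_eq_of_subset
    intro a ha
    rw [Finset.mem_sdiff] at ha ⊢
    refine ⟨shf_mem hWu ha.1, fun hmem => ha.2 ?_⟩
    rw [← hOu, mem_shf] at hmem
    simpa using hmem
  have hWO_v : shf v (W \ O) = W \ O := by
    apply shf_eq_of_subset
    intro a ha
    rw [Finset.mem_sdiff] at ha ⊢
    refine ⟨shf_mem hWv ha.1, fun hmem => ha.2 ?_⟩
    rw [← hOv, mem_shf] at hmem
    simpa using hmem
  have htO : t ∈ O := by rw [hmemO]; left; rfl
  have hss : W \ O ⊂ W := Finset.sdiff_ssubset hOsub ⟨t, htO⟩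
  have hrec := ih _ hss hWO_u hWO_v
  have hsplit : (W \ O).sum id + O.sum id = W.sum id := Finset.sum_sdiff hOsub
  rw [← hsplit, hrec, hOsum]
  simp

lemma total_sum_zero (h2 : ∀ x : G, x + x = 0) (hn : 4 ≤ Fintype.card G) :
    ∑ y : G, y = 0 := by
  haveI : Nontrivial G := Fintype.one_lt_card_iff_nontrivial.mp (by omega)
  obtain ⟨u, hu⟩ := exists_ne (0 : G)
  obtain ⟨v, hv⟩ : ∃ v : G, v ∉ ({0, u} : Finset G) := by
    by_contra h
    push_neg at h
    have hsub : (univ : Finset G) ⊆ ({0, u} : Finset G) := fun y _ => h y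
    have hcle := Finset.card_le_card hsub
    have hc2 : ({0, u} : Finset G).card ≤ 2 := (Finset.card_insert_le _ _).trans (by simp)
    rw [Finset.card_univ] at hcle
    omega
  simp only [Finset.mem_insert, Finset.mem_singleton] at hv
  push_neg at hv
  have := sum_zero_of_two_shifts h2 hu hv.1 (fun h => hv.2 h.symm) univ
    (shf_univ u) (shf_univ v)
  simpa using this

end Swap
section Final
variable {G : Type} [AddCommGroup G] [Fintype G] [DecidableEq G]

lemma torsion_of_exp_two (h : AddMonoid.exponent G = 2) : ∀ x : G, x + x = 0 := by
  intro x
  have h1 := AddMonoid.exponent_nsmul_eq_zero x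
  rwa [h, two_nsmul] at h1

lemma exp_two_of_torsion (h2 : ∀ x : G, x + x = 0) (hn : 2 ≤ Fintype.card G) :
    AddMonoid.exponent G = 2 := by
  have hdvd : AddMonoid.exponent G ∣ 2 :=
    AddMonoid.exponent_dvd_of_forall_nsmul_eq_zero (fun x => by rw [two_nsmul]; exact h2 x)
  haveI : Nontrivial G := Fintype.one_lt_card_iff_nontrivial.mp hn
  obtain ⟨y, hy⟩ := exists_ne (0:G)
  rcases (Nat.dvd_prime Nat.prime_two).mp hdvd with h1 | h1
  · exfalso
    apply hy
    have hz := AddMonoid.exponent_nsmul_eq_zero y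
    rwa [h1, one_nsmul] at hz
  · exact h1

theorem stmt14' (n k : ℕ) (hn : n = Fintype.card G)
    (hk1 : 1 ≤ k) (hkn : k ≤ n - 1) (x : G) :
    sumBlocks G k x = ∅ ↔
      ((k = 2 ∧ AddMonoid.exponent G = 2 ∧ x = 0) ∨
        (k = n - 2 ∧ 2 ≤ k ∧ AddMonoid.exponent G = 2 ∧ x = 0)) := by
  have hcard : Fintype.card G = n := hn.symm
  have hcpos : 1 ≤ Fintype.card G := Fintype.card_pos
  have hn2 : 2 ≤ n := by omega
  constructor
  · intro hemp
    have noap : ¬ ∃ T : Finset G, T.card = k ∧ ∀ δ : G, shf δ T = T → δ = 0 := by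
      rintro ⟨T, hTc, hTap⟩
      have hfix := swap_lemma hemp hTc
      have hδ0 := hTap _ hfix
      have hsum : T.sum id = x := (sub_eq_zero.mp hδ0).symm
      have hmem : T ∈ sumBlocks G k x := by
        rw [sumBlocks, Finset.mem_filter]
        exact ⟨Finset.mem_univ _, hTc, hsum⟩
      rw [hemp] at hmem
      exact absurd hmem (Finset.notMem_empty _)
    have hmain : (∀ y : G, y + y = 0) ∧ (k = 2 ∨ (n - k = 2 ∧ n < 2 * k)) := by
      by_cases hsmall : 2 * k ≤ n
      · have hexc : k = 2 ∧ ∀ y : G, y + y = 0 := by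
          by_contra hco
          exact noap (exists_aperiodic_half k hk1 (by omega) hco)
        exact ⟨hexc.2, Or.inl hexc.1⟩
      · push_neg at hsmall
        have hk' : 1 ≤ n - k := by omega
        have h2k' : 2 * (n - k) ≤ Fintype.card G := by omega
        have hexc : n - k = 2 ∧ ∀ y : G, y + y = 0 := by
          by_contra hco
          apply noap
          obtain ⟨T', hT'c, hT'ap⟩ := exists_aperiodic_half (n - k) hk' h2k' hco
          refine ⟨T'ᶜ, ?_, ?_⟩
          · rw [Finset.card_compl, hT'c, hcard]
            omega
          · intro δ hδ
            apply hT'ap δ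
            have h4 : (shf δ T')ᶜ = T'ᶜ := by rw [← shf_compl, hδ]
            have h5 := congrArg (·ᶜ) h4
            simpa using h5
        exact ⟨hexc.2, Or.inr ⟨hexc.1, hsmall⟩⟩
    obtain ⟨htor, hk2cases⟩ := hmain
    have hneg : ∀ z : G, -z = z := fun z => neg_eq_of_add_eq_zero_left (htor z)
    have hexp2 : AddMonoid.exponent G = 2 := exp_two_of_torsion htor (by omega)
    have hx0 : x = 0 := by
      by_contra hx
      rcases hk2cases with hk2 | ⟨hnk2, hklarge⟩
      · have hmem : ({0, x} : Finset G) ∈ sumBlocks G k x := by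
          rw [sumBlocks, Finset.mem_filter]
          refine ⟨Finset.mem_univ _, ?_, ?_⟩
          · rw [Finset.card_insert_of_notMem (by simpa using Ne.symm hx),
              Finset.card_singleton, hk2]
          · rw [Finset.sum_insert (by simpa using Ne.symm hx), Finset.sum_singleton]
            simp
        rw [hemp] at hmem
        exact absurd hmem (Finset.notMem_empty _)
      · have hk3 : 3 ≤ k := by omega
        have hn5 : 5 ≤ n := by omega
        have hsum0 : (univ : Finset G).sum id = 0 := by
          have := total_sum_zero htor (by omega)
          simpa using this
        have hx0T : (0:G) ∉ ({x} : Finset G) := by simpa using Ne.symm hx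
        set T : Finset G := univ \ {0, x} with hTdef
        have hsubu : ({0, x} : Finset G) ⊆ univ := Finset.subset_univ _
        have hcard2 : ({0, x} : Finset G).card = 2 := by
          rw [Finset.card_insert_of_notMem hx0T, Finset.card_singleton]
        have hTcard : T.card = k := by
          rw [hTdef, Finset.card_sdiff_of_subset hsubu, Finset.card_univ, hcard, hcard2]
          omega
        have hTsum : T.sum id = x := by
          have hsplit : T.sum id + ({0, x} : Finset G).sum id = (univ : Finset G).sum id :=
            Finset.sum_sdiff hsubu
          rw [hsum0, Finset.sum_insert hx0T, Finset.sum_singleton] at hsplit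
          simp only [id_eq, zero_add] at hsplit
          -- hsplit : T.sum id + x = 0
          have := neg_eq_of_add_eq_zero_left hsplit
          rw [hneg] at this
          exact this.symm
        have hmem : T ∈ sumBlocks G k x := by
          rw [sumBlocks, Finset.mem_filter]
          exact ⟨Finset.mem_univ _, hTcard, hTsum⟩
        rw [hemp] at hmem
        exact absurd hmem (Finset.notMem_empty _)
    rcases hk2cases with hk2 | ⟨hnk2, hklarge⟩
    · exact Or.inl ⟨hk2, hexp2, hx0⟩
    · exact Or.inr ⟨by omega, by omega, hexp2, hx0⟩
  · intro hrhs
    have htor : ∀ y : G, y + y = 0 := by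
      rcases hrhs with ⟨_, hexp, _⟩ | ⟨_, _, hexp, _⟩ <;> exact torsion_of_exp_two hexp
    have hneg : ∀ z : G, -z = z := fun z => neg_eq_of_add_eq_zero_left (htor z)
    have habz : ∀ a b : G, a + b = 0 → a = b := by
      intro a b h
      have h1 := neg_eq_of_add_eq_zero_left h
      rw [hneg] at h1
      exact h1.symm
    rcases hrhs with ⟨hk2, hexp, hx0⟩ | ⟨hkn2, hk2le, hexp, hx0⟩
    · rw [Finset.eq_empty_iff_forall_notMem]
      intro T hT
      rw [sumBlocks, Finset.mem_filter] at hT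
      obtain ⟨-, hTc, hTs⟩ := hT
      rw [hk2] at hTc
      obtain ⟨a, b, hab, rfl⟩ := Finset.card_eq_two.mp hTc
      rw [Finset.sum_insert (by simpa using hab), Finset.sum_singleton, hx0] at hTs
      simp only [id_eq] at hTs
      exact hab (habz a b hTs)
    · have hn4 : 4 ≤ n := by omega
      have hsum0 : (univ : Finset G).sum id = 0 := by
        have := total_sum_zero htor (by omega)
        simpa using this
      rw [Finset.eq_empty_iff_forall_notMem]
      intro T hT
      rw [sumBlocks, Finset.mem_filter] at hT
      obtain ⟨-, hTc, hTs⟩ := hT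
      have hcompl : Tᶜ.card = 2 := by
        rw [Finset.card_compl, hTc, hcard, hkn2]
        omega
      obtain ⟨a, b, hab, hTeq⟩ := Finset.card_eq_two.mp hcompl
      have hsplit : T.sum id + Tᶜ.sum id = (univ : Finset G).sum id := by
        have h := Finset.sum_sdiff (Finset.subset_univ T) (f := (id : G → G))
        rw [Finset.compl_eq_univ_sdiff, add_comm]
        exact h
      rw [hTs, hx0, hTeq, Finset.sum_insert (by simpa using hab), Finset.sum_singleton,
        hsum0] at hsplit
      simp only [id_eq, zero_add] at hsplit
      exact hab (habz a b hsplit)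

end Final


theorem stmt14 (G : Type) [AddCommGroup G] [Fintype G] [DecidableEq G]
    (n k : ℕ) (hn : n = Fintype.card G)
    (hk1 : 1 ≤ k) (hkn : k ≤ n - 1) (x : G) :
    sumBlocks G k x = ∅ ↔
      ((k = 2 ∧ AddMonoid.exponent G = 2 ∧ x = 0) ∨
        (k = n - 2 ∧ 2 ≤ k ∧ AddMonoid.exponent G = 2 ∧ x = 0)) := by
  exact stmt14' n k hn hk1 hkn x
end Aux
end

section
/- Let G be a finite abelian group of order n and x, y ∈ G with e(x) = e(y), where e(x) = max{d : d | exp(G), x ∈ dG}. Then the number of k-subsets of G summing to x equals the number of k-subsets summing to y, and similarly for k-subsets of G \ {0}. -/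
open Finset

/-!
Count by characters: `|G| · #{T ⊆ S : |T| = k, ∑ T = x} = ∑_ψ ψ(-x) e_k(ψ(S))`. For `S = G` and
`S = G \ {0}` the multiset `ψ(S)` depends only on the order `d` of `ψ`, since a character of
order `d` takes every `d`-th root of unity exactly `|G| / d` times. Grouping the characters by
order, it remains to see that `∑_{ord ψ = d} ψ(-x)` depends only on `e(x)`. By Möbius inversion
this follows from `∑_{ord ψ ∣ m} ψ(-x) = #{ψ : ord ψ ∣ m} · [x ∈ mG]`, and for `m ∣ exp G` we have
`x ∈ mG ↔ m ∣ e(x)`, because the `m` with `x ∈ mG` are closed under `lcm`.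
-/

section Divisibility

variable {G : Type*} [AddCommGroup G]

theorem exists_lcm_nsmul_eq {a b : ℕ} {x : G} (ha : ∃ u, a • u = x) (hb : ∃ v, b • v = x) :
    ∃ w, Nat.lcm a b • w = x := by
  obtain ⟨u, hu⟩ := ha
  obtain ⟨v, hv⟩ := hb
  obtain ⟨a', b', hcop, ha', hb'⟩ := Nat.exists_coprime a b
  set g := Nat.gcd a b
  have hlcm : Nat.lcm a b = a' * b' * g := by
    rw [ha', hb', Nat.lcm_mul_right, hcop.lcm_eq_mul]
  set s := Nat.gcdA a' b'
  set t := Nat.gcdB a' b'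
  have hbez : (a' * s + b' * t : ℤ) = 1 := by
    rw [← Nat.gcd_eq_gcd_ab, hcop.gcd_eq_one, Nat.cast_one]
  refine ⟨s • v + t • u, ?_⟩
  rw [← natCast_zsmul, ha'] at hu
  rw [← natCast_zsmul, hb'] at hv
  rw [← natCast_zsmul, hlcm]
  push_cast at hu hv ⊢
  -- `lcm • (s • v + t • u) = (a' * s) • (b • v) + (b' * t) • (a • u) = (a' * s + b' * t) • x`
  linear_combination (norm := module) (a' * s) • hv + (b' * t) • hu + hbez • x

theorem exists_nsmul_eq_neg_iff {m : ℕ} {x : G} : (∃ g, m • g = -x) ↔ ∃ g, m • g = x :=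
  ⟨fun ⟨g, hg⟩ => ⟨-g, by rw [smul_neg, hg, neg_neg]⟩,
    fun ⟨g, hg⟩ => ⟨-g, by rw [smul_neg, hg]⟩⟩

end Divisibility

section EMax

variable {G : Type} [AddCommGroup G] [Fintype G] [DecidableEq G]

theorem eMax_dvd_exponent_and_exists_nsmul_eq (x : G) :
    eMax G x ∣ AddMonoid.exponent G ∧ ∃ y, eMax G x • y = x :=
  Nat.findGreatest_spec (P := fun d => d ∣ AddMonoid.exponent G ∧ ∃ y : G, d • y = x) (m := 1)
    (AddMonoid.exponent_pos.mpr .of_finite) ⟨one_dvd _, x, one_smul ℕ x⟩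

theorem le_eMax {d : ℕ} {x : G} (hd : d ∣ AddMonoid.exponent G) (hx : ∃ y, d • y = x) :
    d ≤ eMax G x :=
  Nat.le_findGreatest (Nat.le_of_dvd (AddMonoid.exponent_pos.mpr .of_finite) hd) ⟨hd, hx⟩

theorem dvd_eMax_iff {m : ℕ} (hm : m ∣ AddMonoid.exponent G) (x : G) :
    m ∣ eMax G x ↔ ∃ g, m • g = x := by
  obtain ⟨he, y, hy⟩ := eMax_dvd_exponent_and_exists_nsmul_eq x
  constructor
  · rintro ⟨c, hc⟩
    exact ⟨c • y, by rw [smul_smul, ← hc, hy]⟩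
  · intro hx
    have hlcm : Nat.lcm m (eMax G x) ∣ AddMonoid.exponent G := Nat.lcm_dvd hm he
    have hle : Nat.lcm m (eMax G x) ≤ eMax G x :=
      le_eMax hlcm (exists_lcm_nsmul_eq hx ⟨y, hy⟩)
    have hpos : 0 < Nat.lcm m (eMax G x) :=
      Nat.pos_of_dvd_of_pos hlcm (AddMonoid.exponent_pos.mpr .of_finite)
    rw [← le_antisymm hle (Nat.le_of_dvd hpos (Nat.dvd_lcm_right m _))]
    exact Nat.dvd_lcm_left m _

theorem exists_nsmul_eq_iff_of_eMax_eq {x y : G} (h : eMax G x = eMax G y) {m : ℕ}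
    (hm : m ∣ AddMonoid.exponent G) : (∃ g, m • g = x) ↔ ∃ g, m • g = y := by
  rw [← dvd_eMax_iff hm, h, dvd_eMax_iff hm]

end EMax

namespace AddChar

theorem map_sum_eq_prod_s16 {A M ι : Type*} [AddCommMonoid A] [CommMonoid M] (ψ : AddChar A M)
    (s : Finset ι) (f : ι → A) : ψ (∑ i ∈ s, f i) = ∏ i ∈ s, ψ (f i) := by
  classical
  induction s using Finset.induction_on with
  | empty => simp
  | insert i s hi ih => rw [sum_insert hi, map_add_eq_mul, ih, prod_insert hi]

theorem pow_addOrderOf_apply {A M : Type*} [AddMonoid A] [CommMonoid M] (ψ : AddChar A M)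
    (a : A) : ψ a ^ addOrderOf ψ = 1 := by
  rw [← nsmul_apply, addOrderOf_nsmul_eq_zero, zero_apply]

theorem addOrderOf_dvd_exponent {A M : Type*} [AddMonoid A] [CommMonoid M] (ψ : AddChar A M) :
    addOrderOf ψ ∣ AddMonoid.exponent A :=
  addOrderOf_dvd_of_nsmul_eq_zero <| ext _ _ fun a => by
    rw [nsmul_apply, ← map_nsmul_eq_pow, AddMonoid.exponent_nsmul_eq_zero, map_zero_eq_one,
      zero_apply]

variable {G : Type*} [AddCommGroup G] [Fintype G]

theorem addOrderOf_mul_card_filter_apply_eq (ψ : AddChar G ℂ) {z : ℂ}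
    (hz : z ^ addOrderOf ψ = 1) : addOrderOf ψ * #{a | ψ a = z} = Fintype.card G := by
  set d := addOrderOf ψ
  have hd : 0 < d := addOrderOf_pos ψ
  have hz0 : z ≠ 0 := by rintro rfl; simp [hd.ne'] at hz
  -- Averaging the powers of the `d`-th root of unity `ψ a / z` detects whether `ψ a = z`.
  have hdetect : ∀ a, ∑ j ∈ range d, (ψ a * z⁻¹) ^ j = if ψ a = z then (d : ℂ) else 0 := by
    intro a
    split_ifs with ha
    · simp [ha, hz0]
    · have hw : ψ a * z⁻¹ - 1 ≠ 0 := by rwa [sub_ne_zero, Ne, mul_inv_eq_one₀ hz0]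
      have := geom_sum_mul (ψ a * z⁻¹) d
      rw [mul_pow, inv_pow, hz, pow_addOrderOf_apply, inv_one, mul_one, sub_self] at this
      exact (mul_eq_zero.mp this).resolve_right hw
  have horth : ∀ j ∈ range d, j ≠ 0 → ∑ a, ψ a ^ j = 0 := fun j hj hj0 =>
    sum_eq_zero_iff_ne_zero.mpr (nsmul_ne_zero_of_lt_addOrderOf hj0 (mem_range.mp hj))
  apply Nat.cast_injective (R := ℂ)
  push_cast
  calc (d : ℂ) * #{a | ψ a = z} = ∑ a, ∑ j ∈ range d, (ψ a * z⁻¹) ^ j := by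
        simp_rw [hdetect, sum_ite, sum_const_zero, add_zero, sum_const, nsmul_eq_mul, mul_comm]
    _ = ∑ j ∈ range d, z⁻¹ ^ j * ∑ a, ψ a ^ j := by
        rw [sum_comm]; simp_rw [mul_sum, mul_pow, mul_comm]
    _ = Fintype.card G := by
        rw [sum_eq_single_of_mem 0 (mem_range.mpr hd) fun j hj hj0 => by
          rw [horth j hj hj0, mul_zero]]
        simp

theorem map_univ_val (ψ : AddChar G ℂ) :
    univ.val.map ψ = (Fintype.card G / addOrderOf ψ) •
      (Polynomial.nthRootsFinset (addOrderOf ψ) (1 : ℂ)).val := by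
  have hd := addOrderOf_pos ψ
  ext z
  have hfiber : Multiset.count z (univ.val.map ψ) = #{a | ψ a = z} := by
    rw [Multiset.count_map, ← filter_val, card_val]
    simp_rw [eq_comm]
  rw [hfiber, Multiset.count_nsmul, Multiset.count_eq_of_nodup (nodup _)]
  simp only [mem_val, Polynomial.mem_nthRootsFinset hd]
  split_ifs with hz
  · rw [mul_one, ← addOrderOf_mul_card_filter_apply_eq ψ hz, Nat.mul_div_cancel_left _ hd]
  · rw [mul_zero, card_eq_zero, filter_eq_empty_iff]
    exact fun a _ ha => hz (ha ▸ pow_addOrderOf_apply ψ a)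

theorem sum_addOrderOf_dvd_apply_of_not_exists {m : ℕ} {a : G} (ha : ¬ ∃ g, m • g = a) :
    ∑ ψ : AddChar G ℂ with addOrderOf ψ ∣ m, ψ a = 0 := by
  set H := (nsmulAddMonoidHom m : G →+ G).range
  obtain ⟨χ, hχ⟩ : ∃ χ : AddChar (G ⧸ H) ℂ, χ a ≠ 1 :=
    exists_apply_ne_zero.mpr <| by rwa [Ne, QuotientAddGroup.eq_zero_iff]
  -- `ψ₀` is trivial on `mG` but not at `a`; translating by it permutes the summation range.
  set ψ₀ := χ.compAddMonoidHom (QuotientAddGroup.mk' H)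
  have hψ₀ : m • ψ₀ = 0 := ext _ _ fun g => by
    rw [nsmul_apply, ← map_nsmul_eq_pow, compAddMonoidHom_apply, QuotientAddGroup.mk'_apply,
      (QuotientAddGroup.eq_zero_iff (m • g)).mpr (AddMonoidHom.mem_range.mpr ⟨g, rfl⟩),
      map_zero_eq_one, zero_apply]
  have hshift : ∑ ψ : AddChar G ℂ with addOrderOf ψ ∣ m, (ψ₀ + ψ) a
      = ∑ ψ : AddChar G ℂ with addOrderOf ψ ∣ m, ψ a :=
    sum_equiv (Equiv.addLeft ψ₀)
      (fun ψ => by simp [addOrderOf_dvd_iff_nsmul_eq_zero, hψ₀]) fun _ _ => rfl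
  simp_rw [add_apply, ← mul_sum] at hshift
  by_contra hS
  exact hχ ((mul_eq_right₀ hS).mp hshift)

theorem sum_addOrderOf_dvd_apply [DecidableEq G] (m : ℕ) (a : G) :
    ∑ ψ : AddChar G ℂ with addOrderOf ψ ∣ m, ψ a
      = if ∃ g, m • g = a then (#{ψ : AddChar G ℂ | addOrderOf ψ ∣ m} : ℂ) else 0 := by
  split_ifs with ha
  · obtain ⟨g, rfl⟩ := ha
    rw [card_eq_sum_ones, Nat.cast_sum, Nat.cast_one]
    refine sum_congr rfl fun ψ hψ => ?_
    rw [map_nsmul_eq_pow, ← nsmul_apply,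
      addOrderOf_dvd_iff_nsmul_eq_zero.mp (mem_filter.mp hψ).2, zero_apply]
  · exact sum_addOrderOf_dvd_apply_of_not_exists ha

theorem sum_addOrderOf_eq_apply (a : G) {d : ℕ} (hd : 0 < d) :
    ∑ ψ : AddChar G ℂ with addOrderOf ψ = d, ψ a
      = ∑ p ∈ d.divisorsAntidiagonal,
          ArithmeticFunction.moebius p.1 • ∑ ψ : AddChar G ℂ with addOrderOf ψ ∣ p.2, ψ a := by
  refine (ArithmeticFunction.sum_eq_iff_sum_smul_moebius_eq
    (f := fun d => ∑ ψ : AddChar G ℂ with addOrderOf ψ = d, ψ a)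
    (g := fun m => ∑ ψ : AddChar G ℂ with addOrderOf ψ ∣ m, ψ a)).mp (fun m hm => ?_) d hd |>.symm
  rw [sum_fiberwise_eq_sum_filter]
  refine sum_congr (filter_congr fun ψ _ => ?_) fun _ _ => rfl
  simp [hm.ne']

theorem sum_apply_mul_addOrderOf_eq [DecidableEq G] (f : ℕ → ℂ) {a b : G}
    (hab : ∀ m, m ∣ AddMonoid.exponent G → ((∃ g, m • g = a) ↔ ∃ g, m • g = b)) :
    ∑ ψ : AddChar G ℂ, ψ a * f (addOrderOf ψ) = ∑ ψ : AddChar G ℂ, ψ b * f (addOrderOf ψ) := by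
  have hN : AddMonoid.exponent G ≠ 0 := (AddMonoid.exponent_pos.mpr .of_finite).ne'
  have hfiber : ∀ c : G, ∑ ψ : AddChar G ℂ, ψ c * f (addOrderOf ψ)
      = ∑ d ∈ (AddMonoid.exponent G).divisors,
          f d * ∑ ψ : AddChar G ℂ with addOrderOf ψ = d, ψ c := fun c => by
    rw [← sum_fiberwise_of_maps_to fun ψ _ =>
      Nat.mem_divisors.mpr ⟨ψ.addOrderOf_dvd_exponent, hN⟩]
    refine sum_congr rfl fun d _ => ?_
    rw [mul_sum]
    exact sum_congr rfl fun ψ hψ => by rw [(mem_filter.mp hψ).2, mul_comm]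
  rw [hfiber, hfiber]
  refine sum_congr rfl fun d hd => ?_
  have hdN := (Nat.mem_divisors.mp hd).1
  have hd0 : 0 < d := Nat.pos_of_dvd_of_pos hdN (Nat.pos_of_ne_zero hN)
  rw [sum_addOrderOf_eq_apply a hd0, sum_addOrderOf_eq_apply b hd0]
  refine congrArg _ (sum_congr rfl fun p hp => ?_)
  have hp : p.2 ∣ AddMonoid.exponent G :=
    (Dvd.intro_left _ (Nat.mem_divisorsAntidiagonal.mp hp).1).trans hdN
  simp only [sum_addOrderOf_dvd_apply, hab p.2 hp]

end AddChar

section Counting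

variable {G : Type} [AddCommGroup G] [Fintype G] [DecidableEq G]

theorem card_mul_card_filter_sum_eq_s16 (S : Finset G) (k : ℕ) (z : G) :
    (Fintype.card G : ℂ) * #{T ∈ S.powersetCard k | T.sum id = z}
      = ∑ ψ : AddChar G ℂ, ψ (-z) * (S.val.map ψ).esymm k := by
  calc (Fintype.card G : ℂ) * #{T ∈ S.powersetCard k | T.sum id = z}
      = ∑ T ∈ S.powersetCard k, ∑ ψ : AddChar G ℂ, ψ (T.sum id - z) := by
        simp_rw [AddChar.sum_apply_eq_ite, sub_eq_zero]
        rw [sum_ite, sum_const_zero, add_zero, sum_const, nsmul_eq_mul, mul_comm]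
    _ = ∑ ψ : AddChar G ℂ, ψ (-z) * (S.val.map ψ).esymm k := by
        rw [sum_comm]
        simp_rw [esymm_map_val, mul_sum, sub_eq_neg_add, AddChar.map_add_eq_mul]
        exact sum_congr rfl fun ψ _ => sum_congr rfl fun T _ => by
          rw [ψ.map_sum_eq_prod_s16 T id]; rfl

theorem card_filter_sum_eq_of_eMax_eq {S : Finset G} (M : ℕ → Multiset ℂ)
    (hS : ∀ ψ : AddChar G ℂ, S.val.map ψ = M (addOrderOf ψ)) (k : ℕ) {x y : G}
    (h : eMax G x = eMax G y) :
    #{T ∈ S.powersetCard k | T.sum id = x} = #{T ∈ S.powersetCard k | T.sum id = y} := by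
  apply Nat.cast_injective (R := ℂ)
  apply mul_left_cancel₀ (Nat.cast_ne_zero.mpr Fintype.card_ne_zero : (Fintype.card G : ℂ) ≠ 0)
  simp_rw [card_mul_card_filter_sum_eq_s16, hS]
  exact AddChar.sum_apply_mul_addOrderOf_eq (fun d => (M d).esymm k) fun m hm => by
    rw [exists_nsmul_eq_neg_iff, exists_nsmul_eq_neg_iff, exists_nsmul_eq_iff_of_eMax_eq h hm]

end Counting

theorem sumBlocks_eq_filter_powersetCard (G : Type) [AddCommGroup G] [Fintype G]
    [DecidableEq G] (k : ℕ) (x : G) :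
    sumBlocks G k x = {T ∈ (univ : Finset G).powersetCard k | T.sum id = x} := by
  ext T
  simp [sumBlocks]

theorem sumBlocksStar_eq_filter_powersetCard_s16 (G : Type) [AddCommGroup G] [Fintype G]
    [DecidableEq G] (k : ℕ) (x : G) :
    sumBlocksStar G k x = {T ∈ (univ.erase (0 : G)).powersetCard k | T.sum id = x} := by
  ext T
  simp only [sumBlocksStar, mem_filter, mem_univ, true_and, mem_powersetCard, subset_erase,
    subset_univ]
  tauto

theorem stmt16 (G : Type) [AddCommGroup G] [Fintype G] [DecidableEq G]
    (x y : G) (h : eMax G x = eMax G y) (k : ℕ) :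
    (sumBlocks G k x).card = (sumBlocks G k y).card ∧
      (sumBlocksStar G k x).card = (sumBlocksStar G k y).card := by
  set M : ℕ → Multiset ℂ := fun d =>
    (Fintype.card G / d) • (Polynomial.nthRootsFinset d (1 : ℂ)).val
  have hG : ∀ ψ : AddChar G ℂ, univ.val.map ψ = M (addOrderOf ψ) := AddChar.map_univ_val
  have hG' : ∀ ψ : AddChar G ℂ, (univ.erase (0 : G)).val.map ψ = (M (addOrderOf ψ)).erase 1 :=
    fun ψ => by
      rw [erase_val, Multiset.map_erase_of_mem _ _ (mem_univ_val 0), AddChar.map_zero_eq_one, hG]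
  simp only [sumBlocks_eq_filter_powersetCard, sumBlocksStar_eq_filter_powersetCard_s16]
  exact ⟨card_filter_sum_eq_of_eMax_eq M hG k h,
    card_filter_sum_eq_of_eMax_eq (fun d => (M d).erase 1) hG' k h⟩
end

section
/- Let n, q, k be positive integers with q ≥ 2, q | n, and q + 1 ≤ k ≤ (n+1)/2, and let p ≥ 2 with pq | n. Then C(n/q - 1, ⌊(k-1)/q⌋) > C(n/(pq) - 1, ⌊(k-1)/(pq)⌋). -/
open Finset

/-! The right-hand side turns into the left-hand side in two steps: the upper index drops from
`n/q - 1` to `n/(pq) - 1`, which cannot increase the binomial, and the lower index drops from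
`a = ⌊(k-1)/q⌋ ≥ 1` to `⌊a/p⌋ < a`, which strictly decreases it because `2a < n/q`, i.e. both
lower indices lie in the range where `r ↦ C(n/q - 1, r)` is strictly increasing. -/

namespace Nat

theorem choose_lt_choose_succ_of_succ_le_half {n r : ℕ} (h : r + 1 ≤ n / 2) :
    n.choose r < n.choose (r + 1) := by
  refine Nat.lt_of_mul_lt_mul_right (a := r + 1) ?_
  rw [choose_succ_right_eq]
  exact Nat.mul_lt_mul_of_pos_left (by omega) (choose_pos (by omega))

theorem choose_strictMonoOn_Iic_half (n : ℕ) : StrictMonoOn n.choose (Set.Iic (n / 2)) :=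
  strictMonoOn_Iic_of_lt_succ fun r hr => by
    rw [Order.succ_eq_add_one]
    exact choose_lt_choose_succ_of_succ_le_half hr

theorem two_mul_div_lt_div_of_dvd {q n j : ℕ} (hq : q ∣ n) (h : 2 * j < n) :
    2 * (j / q) < n / q := by
  rw [Nat.lt_div_iff_mul_lt' hq]
  calc q * (2 * (j / q)) = 2 * (q * (j / q)) := Nat.mul_left_comm _ _ _
    _ ≤ 2 * j := Nat.mul_le_mul_left 2 (Nat.mul_div_le j q)
    _ < n := h

end Nat

theorem stmt19_general (n q k p : ℕ) (hq2 : 2 ≤ q) (hp2 : 2 ≤ p)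
    (hqn : q ∣ n)
    (hk1 : q + 1 ≤ k) (hk2 : 2 * k ≤ n + 1) :
    (n / (p * q) - 1).choose ((k - 1) / (p * q)) < (n / q - 1).choose ((k - 1) / q) := by
  set a := (k - 1) / q
  have ha_pos : 1 ≤ a := (Nat.le_div_iff_mul_le (by omega)).2 (by omega)
  have hb_lt : (k - 1) / (p * q) < a := by
    rw [Nat.mul_comm, ← Nat.div_div_eq_div_mul]
    exact Nat.div_lt_self ha_pos hp2
  have ha_half : a ≤ (n / q - 1) / 2 := by
    have := Nat.two_mul_div_lt_div_of_dvd hqn (j := k - 1) (by omega)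
    omega
  have h_top : n / (p * q) ≤ n / q :=
    Nat.div_le_div_left (Nat.le_mul_of_pos_left q (by omega)) (by omega)
  calc (n / (p * q) - 1).choose ((k - 1) / (p * q))
      ≤ (n / q - 1).choose ((k - 1) / (p * q)) := Nat.choose_le_choose _ (by omega)
    _ < (n / q - 1).choose a :=
      Nat.choose_strictMonoOn_Iic_half _ (by rw [Set.mem_Iic]; omega) ha_half hb_lt

theorem stmt19 (n q k p : ℕ) (hq2 : 2 ≤ q) (hp2 : 2 ≤ p)
    (hqn : q ∣ n) (hpqn : p * q ∣ n)
    (hk1 : q + 1 ≤ k) (hk2 : 2 * k ≤ n + 1) :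
    (n / (p * q) - 1).choose ((k - 1) / (p * q)) < (n / q - 1).choose ((k - 1) / q) :=
  stmt19_general n q k p hq2 hp2 hqn hk1 hk2
end
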